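/- arXiv:2605.04182 — 11 statements merged into one kernel-verified Lean document; each statement's English description precedes it below -/
import Mathlib

section
/- Let 𝒪_K be a discrete valuation ring of characteristic p > 0 with fraction field K and perfect residue field. Then for every a ∈ K there exists a finite separable field extension L/K such that a ∈ 𝒪_L + L^p, where 𝒪_L is the integral closure of 𝒪_K in L and L^p = {w^p : w ∈ L}. (This is the cohomology-free form of the main theorem that every α_p-torsor over Spec K étale extends to Spec 𝒪_K, via the identification H^1(R, α_p) ≅ R/R^p.) -/
private lemma aux_coprime_unit {R : Type*} [CommSemiring R] {x u : R} (hu : IsUnit u) :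
    IsCoprime x u := by
  obtain ⟨v, hv⟩ := hu.exists_left_inv
  exact ⟨0, v, by simp [hv]⟩

/-- Let `𝒪_K` be a discrete valuation ring of characteristic `p > 0` with
fraction field `K` and perfect residue field. Then for every `a ∈ K` there is a finite
separable field extension `L/K` such that `a ∈ 𝒪_L + L^p`, where `𝒪_L` is the integral
closure of `𝒪_K` in `L`. -/
theorem statement_0 (p : ℕ) (hp : p.Prime)
    (A : Type) [CommRing A] [IsDomain A] [IsDiscreteValuationRing A] [CharP A p]
    (hperf : ∀ x : IsLocalRing.ResidueField A, ∃ y : IsLocalRing.ResidueField A, y ^ p = x)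
    (K : Type) [Field K] [Algebra A K] [IsFractionRing A K] (a : K) :
    ∃ (L : Type) (_ : Field L) (_ : Algebra K L) (_ : Algebra A L) (_ : IsScalarTower A K L),
      FiniteDimensional K L ∧ Algebra.IsSeparable K L ∧
        ∃ u w : L, IsIntegral A u ∧ algebraMap K L a = u + w ^ p := by
  classical
  haveI : CharP K p := charP_of_injective_algebraMap (IsFractionRing.injective A K) p
  obtain ⟨s, t, ht, hst⟩ := IsFractionRing.div_surjective (A := A) a
  set d : K := algebraMap A K t with hd
  have hd0 : d ≠ 0 := IsFractionRing.to_map_ne_zero_of_mem_nonZeroDivisors ht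
  have hp2 : 2 ≤ p := hp.two_le
  have hpe : p = (p - 1) + 1 := by omega
  set g : Polynomial K := Polynomial.X ^ p - Polynomial.C (d ^ p) * Polynomial.X
      - Polynomial.C (d ^ p * a) with hg
  have hgeq : g = Polynomial.X ^ p
      - (Polynomial.C (d ^ p) * Polynomial.X + Polynomial.C (d ^ p * a)) := by ring
  have hdegle : (Polynomial.C (d ^ p) * Polynomial.X + Polynomial.C (d ^ p * a)).degree ≤ 1 :=
    Polynomial.degree_linear_le
  have hdeg : g.degree = p := by
    rw [hgeq, Polynomial.degree_sub_eq_left_of_degree_lt, Polynomial.degree_X_pow]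
    rw [Polynomial.degree_X_pow]
    refine lt_of_le_of_lt hdegle ?_
    exact_mod_cast lt_of_lt_of_le one_lt_two (by exact_mod_cast hp2)
  have hg0 : g.degree ≠ 0 := by
    rw [hdeg]; exact_mod_cast fun h => (by omega : p ≠ 0) (by exact_mod_cast h)
  have hderiv : g.derivative = -Polynomial.C (d ^ p) := by
    simp only [hg, Polynomial.derivative_sub, Polynomial.derivative_mul,
      Polynomial.derivative_C, Polynomial.derivative_X, Polynomial.derivative_X_pow]
    simp [CharP.cast_eq_zero]
  have hsep : g.Separable := by
    rw [Polynomial.Separable, hderiv]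
    refine (aux_coprime_unit ?_).neg_right
    exact Polynomial.isUnit_C.mpr (IsUnit.mk0 _ (pow_ne_zero _ hd0))
  set L := g.SplittingField with hL
  haveI : IsGalois K L := IsGalois.of_separable_splitting_field hsep
  obtain ⟨y, hy⟩ := (Polynomial.Splits.exists_eval_eq_zero
    (Polynomial.SplittingField.splits g) (by rwa [Polynomial.degree_map])).imp
    fun _ h => by rwa [Polynomial.eval_map] at h
  have hbL : (algebraMap K L d) ≠ 0 := fun h => hd0 ((algebraMap K L).injective (by simp [h]))
  have hyeq : y ^ p = (algebraMap K L d) ^ p * y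
      + (algebraMap K L d) ^ p * algebraMap K L a := by
    have h2 := hy
    simp only [hg, Polynomial.eval₂_sub, Polynomial.eval₂_mul, Polynomial.eval₂_pow,
      Polynomial.eval₂_X, Polynomial.eval₂_C, map_pow, map_mul] at h2
    rw [sub_sub, sub_eq_zero] at h2
    rw [h2]
  have hdp : d ^ p = d ^ (p - 1) * d := by
    conv_lhs => rw [hpe, pow_succ]
  have hda : d * a = algebraMap A K s := by rw [← hst]; field_simp
  have key : d ^ p * a = algebraMap A K (t ^ (p - 1) * s) := by
    rw [map_mul, map_pow, ← hd, hdp, mul_assoc, hda]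
  refine ⟨L, inferInstance, inferInstance, inferInstance, inferInstance,
    inferInstance, inferInstance, -y, y / algebraMap K L d, ?_, ?_⟩
  · apply IsIntegral.neg
    refine ⟨Polynomial.X ^ p - Polynomial.C (t ^ p) * Polynomial.X
      - Polynomial.C (t ^ (p - 1) * s), ?_, ?_⟩
    · have : Polynomial.X ^ p - Polynomial.C (t ^ p) * Polynomial.X
          - Polynomial.C (t ^ (p - 1) * s)
          = Polynomial.X ^ ((p - 1) + 1)
            - (Polynomial.C (t ^ p) * Polynomial.X + Polynomial.C (t ^ (p - 1) * s)) := by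
        rw [← hpe]; ring
      rw [this]
      apply Polynomial.monic_X_pow_sub
      refine lt_of_le_of_lt Polynomial.degree_linear_le ?_
      rw [← hpe]
      exact_mod_cast (by omega : (1 : ℕ) < p)
    · have hAL : ∀ x : A, algebraMap A L x = algebraMap K L (algebraMap A K x) := fun x =>
        IsScalarTower.algebraMap_apply A K L x
      have htp : algebraMap A K (t ^ p) = d ^ p := by rw [map_pow, ← hd]
      simp only [Polynomial.eval₂_sub, Polynomial.eval₂_mul, Polynomial.eval₂_pow,
        Polynomial.eval₂_X, Polynomial.eval₂_C, hAL]
      rw [← key, htp, map_mul, map_pow, hyeq]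
      ring
  · have hw : (y / algebraMap K L d) ^ p = y + algebraMap K L a := by
      rw [div_pow, hyeq]
      field_simp
    rw [hw]; ring
end

section
/- Let 𝒪_K be a discrete valuation ring of characteristic p > 0 with fraction field K, perfect residue field, normalized valuation v and uniformizer t. Let a ∈ K with v(a) = −m < 0 and p ∤ m. Let s ∈ ℕ with p ∤ s and (p−1)s > mp, and let L = K_{℘, t^{−s}} be the splitting field over K of T^p − T − t^{−s}. Then there exist u in the integral closure 𝒪_L of 𝒪_K in L and w ∈ L such that a = u + w^p. -/
open Polynomial

/-- `v` is a *normalized* discrete (additive) valuation on a field `K`: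
it attains every integer value (i.e. `v : K^× → ℤ` is surjective). -/
def IsNormalizedVal {K : Type*} [Field K] (v : AddValuation K (WithTop ℤ)) : Prop :=
  ∀ n : ℤ, ∃ x : K, v x = (n : WithTop ℤ)

/-- The valuation `w` on `L` extends the valuation `v` on `K` with ramification index `e`,
i.e. the restriction of `w` to `K^×` equals `e • v`. -/
def ExtendsWith {K L : Type*} [Field K] [Field L] [Algebra K L]
    (v : AddValuation K (WithTop ℤ)) (w : AddValuation L (WithTop ℤ)) (e : ℤ) : Prop :=
  ∀ (x : K) (n : ℤ), v x = (n : WithTop ℤ) →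
    w (algebraMap K L x) = ((e * n : ℤ) : WithTop ℤ)

/-- `u ∈ L` lies in the integral closure in `L` of the valuation ring
`𝒪_K = {x : K | 0 ≤ v x}` : it is a root of a monic polynomial with coefficients in `𝒪_K`. -/
def MemIntegralClosureOfVal {K L : Type*} [Field K] [Field L] [Algebra K L]
    (v : AddValuation K (WithTop ℤ)) (u : L) : Prop :=
  ∃ g : Polynomial K, g.Monic ∧ (∀ i, (0 : WithTop ℤ) ≤ v (g.coeff i)) ∧
    Polynomial.aeval u g = 0

/-- The residue field of the valuation ring of `v` is perfect: every residue class of an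
integer of `v` contains a `p`-th power of an integer, up to the maximal ideal. -/
def ResidueFieldPerfect (p : ℕ) {K : Type*} [Field K]
    (v : AddValuation K (WithTop ℤ)) : Prop :=
  ∀ u : K, 0 ≤ v u → ∃ c : K, 0 ≤ v c ∧ 0 < v (u - c ^ p)

/-- Let `𝒪_K` be a DVR of characteristic `p > 0` with fraction field `K`,
perfect residue field, normalized valuation `v` and uniformizer `t`.  Let `a ∈ K` with
`v(a) = -m < 0` and `p ∤ m`.  Let `s ∈ ℕ` with `p ∤ s` and `(p-1)s > mp`, and let
`L = K_{℘, t^{-s}}` be the splitting field of `T^p - T - t^{-s}` over `K`.  Then there exist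
`u` in the integral closure `𝒪_L` of `𝒪_K` in `L` and `w ∈ L` with `a = u + w^p`. -/
theorem statement_1 (p : ℕ) (hp : p.Prime) (K : Type) [Field K] [CharP K p]
    (v : AddValuation K (WithTop ℤ)) (hv : IsNormalizedVal v)
    (hperf : ResidueFieldPerfect p v)
    (t : K) (ht : v t = (1 : WithTop ℤ))
    (a : K) (m : ℕ) (hm : 0 < m) (ha : v a = ((-(m : ℤ) : ℤ) : WithTop ℤ)) (hpm : ¬ p ∣ m)
    (s : ℕ) (hps : ¬ p ∣ s) (hs : m * p < (p - 1) * s)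
    (L : Type) [Field L] [Algebra K L]
    (hL : IsSplittingField K L (X ^ p - X - C (t ^ (-(s : ℤ))))) :
    ∃ u w : L, MemIntegralClosureOfVal v u ∧ algebraMap K L a = u + w ^ p := by
  classical
  haveI : Fact p.Prime := ⟨hp⟩
  haveI : NeZero p := ⟨hp.pos.ne'⟩
  haveI : CharP L p := charP_of_injective_algebraMap (algebraMap K L).injective p
  have hp2 : 2 ≤ p := hp.two_le
  have hppos : 0 < p := hp.pos
  have ht0 : t ≠ 0 := by
    intro h
    rw [h, AddValuation.map_zero] at ht
    exact absurd ht (by simp)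
  have ht0' : t ^ (-(s : ℤ)) ≠ 0 := zpow_ne_zero _ ht0
  have hvt : ∀ n : ℕ, v (t ^ n) = ((n : ℤ) : WithTop ℤ) := by
    intro n
    induction n with
    | zero => simpa using v.map_one
    | succ k ih =>
      rw [pow_succ, v.map_mul, ih, ht]
      norm_cast
  -- the valuation subring
  let O : Subring K :=
  { carrier := {x : K | 0 ≤ v x}
    one_mem' := by simp [v.map_one]
    mul_mem' := fun {x y} hx hy => by
      simp only [Set.mem_setOf_eq, v.map_mul]
      exact add_nonneg hx hy
    zero_mem' := by simp [v.map_zero]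
    add_mem' := fun {x y} hx hy => le_trans (le_min hx hy) (v.map_add x y)
    neg_mem' := fun {x} hx => by simpa [v.map_neg] using hx }
  letI algOL : Algebra O L := ((algebraMap K L).comp O.subtype).toAlgebra
  have halgO : ∀ x : O, algebraMap O L x = algebraMap K L (x : K) := fun x => rfl
  have hintO : ∀ c : K, 0 ≤ v c → IsIntegral O (algebraMap K L c) := by
    intro c hc
    refine ⟨X - C ⟨c, hc⟩, monic_X_sub_C _, ?_⟩
    rw [eval₂_sub, eval₂_X, eval₂_C, halgO, sub_self]
  -- the root α
  have hdeg : (X ^ p - X - C (t ^ (-(s : ℤ))) : K[X]).degree ≠ 0 := by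
    have h1 : (X + C (t ^ (-(s : ℤ))) : K[X]).degree < (X ^ p : K[X]).degree := by
      rw [degree_X_add_C, degree_X_pow]
      exact_mod_cast hp.one_lt
    rw [sub_sub, degree_sub_eq_left_of_degree_lt h1, degree_X_pow]
    exact_mod_cast hppos.ne'
  obtain ⟨α, hα0⟩ := Polynomial.Splits.exists_eval_eq_zero
    (@IsSplittingField.splits K L _ _ _ _ hL) (by rwa [degree_map])
  rw [eval_map] at hα0
  set τ : L := algebraMap K L t with hτdef
  have hτ0 : τ ≠ 0 := fun h => ht0 ((_root_.map_eq_zero (algebraMap K L)).mp h)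
  have hα : α ^ p = α + τ ^ (-(s : ℤ)) := by
    have := hα0
    simp only [eval₂_sub, eval₂_X_pow, eval₂_X, eval₂_C] at this
    rw [sub_sub, sub_eq_zero] at this
    rw [this, map_zpow₀]
  -- the integral element β
  set e : ℕ := s / p + 1 with hedef
  have hspos : 0 < s := Nat.pos_of_ne_zero (fun h => hps (h ▸ dvd_zero p))
  have hvtn : ∀ n : ℕ, (0 : WithTop ℤ) ≤ v (t ^ n) := by
    intro n
    rw [hvt]
    exact_mod_cast Int.natCast_nonneg n
  have hes : s + 1 ≤ e * p := by
    have h1 := Nat.div_add_mod s p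
    have h2 := Nat.mod_lt s hppos
    have hq : e * p = p * (s / p) + p := by rw [hedef]; ring
    omega
  have heles : e ≤ s := by
    have h1 : s / p < s := Nat.div_lt_self hspos hp.one_lt
    omega
  set β : L := τ ^ e * α with hβdef
  have hτs : τ ^ (s : ℕ) * τ ^ (-(s : ℤ)) = 1 := by
    rw [← zpow_natCast τ s, ← zpow_add₀ hτ0]
    simp
  have hβint : IsIntegral O β := by
    refine ⟨X ^ p - (C ⟨t ^ (e * (p - 1)), hvtn _⟩ * X
      + C ⟨t ^ (e * p - s), hvtn _⟩), ?_, ?_⟩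
    · refine monic_X_pow_sub ?_
      refine lt_of_le_of_lt degree_linear_le ?_
      exact_mod_cast hp.one_lt
    · rw [eval₂_sub, eval₂_X_pow, eval₂_add, eval₂_mul, eval₂_C, eval₂_X, eval₂_C,
        halgO, halgO]
      have hβp : β ^ p = τ ^ (e * p) * α ^ p := by
        rw [hβdef, mul_pow, ← pow_mul]
      rw [hβp, hα, mul_add]
      have hexp : e * (p - 1) + e = e * p := by
        rw [← Nat.mul_succ]
        congr 1
        omega
      have h2 : τ ^ (e * p) * τ ^ (-(s:ℤ)) = algebraMap K L (t ^ (e * p - s)) := by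
        calc τ ^ (e * p) * τ ^ (-(s:ℤ))
            = τ ^ (e * p - s) * (τ ^ (s:ℕ) * τ ^ (-(s:ℤ))) := by
              rw [← mul_assoc, ← pow_add]
              congr 2
              omega
          _ = algebraMap K L (t ^ (e * p - s)) := by rw [hτs, mul_one, map_pow]
      have h3 : τ ^ (e * p) * α = algebraMap K L (t ^ (e * (p - 1))) * β := by
        rw [hβdef, map_pow, ← hτdef, ← mul_assoc, ← pow_add, hexp]
      rw [h2, h3]
      ring
  have hone : ∀ x : WithTop ℤ, 0 < x → (1 : WithTop ℤ) ≤ x := by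
    intro x hx
    cases x with
    | top => exact le_top
    | coe y =>
      have : (0:ℤ) < y := by exact_mod_cast hx
      exact_mod_cast this
  -- main induction
  have key : ∀ n : ℕ, p * n < (p - 1) * s → ∀ b : K, (-(n:ℤ) : WithTop ℤ) ≤ v b →
      ∃ u w' : L, IsIntegral O u ∧ algebraMap K L b = u + w' ^ p := by
    intro n
    induction n with
    | zero =>
      intro _ b hb
      have h0 : 0 ≤ v b := by simpa using hb
      exact ⟨algebraMap K L b, 0, hintO b h0, by rw [zero_pow hppos.ne', add_zero]⟩
    | succ n IH =>
      intro hbound b hb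
      by_cases h0 : 0 ≤ v b
      · exact ⟨algebraMap K L b, 0, hintO b h0, by rw [zero_pow hppos.ne', add_zero]⟩
      have hvbne : v b ≠ ⊤ := fun h => h0 (h ▸ le_top)
      obtain ⟨z, hz⟩ := WithTop.ne_top_iff_exists.mp hvbne
      have hzneg : z < 0 := by
        by_contra hzz
        refine h0 ?_
        rw [← hz]
        exact_mod_cast not_lt.mp hzz
      have hzge : -((n:ℤ)+1) ≤ z := by
        rw [← hz] at hb
        exact_mod_cast hb
      set n' : ℕ := z.natAbs with hn'def
      have hzn' : z = -(n' : ℤ) := by omega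
      have hn'pos : 0 < n' := by omega
      have hn'le : n' ≤ n + 1 := by omega
      have hn'bound : p * n' < (p - 1) * s :=
        lt_of_le_of_lt (Nat.mul_le_mul_left p hn'le) hbound
      -- the inequality e + n' ≤ s
      have hn'lts : n' < s := by
        have h1 : (p-1) * s ≤ p * s := Nat.mul_le_mul_right s (Nat.sub_le p 1)
        have h2 : p * n' < p * s := lt_of_lt_of_le hn'bound h1
        exact lt_of_mul_lt_mul_left h2 (Nat.zero_le p)
      have hA : s + 1 ≤ p * (s - n') := by
        have h1 : p * (s - n') + p * n' = p * s := by
          rw [← Nat.mul_add]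
          congr 1
          omega
        have h2 : (p - 1) * s + s = p * s := by
          rw [← Nat.succ_mul]
          congr 1
          omega
        omega
      have hen' : e + n' ≤ s := by
        have h3 : s / p < s - n' := by
          rw [Nat.div_lt_iff_lt_mul hppos]
          rw [Nat.mul_comm]
          omega
        omega
      have hie : ∀ i : ℕ, 1 ≤ i → e * i + n' ≤ s * i := by
        intro i hi
        calc e * i + n' ≤ e * i + n' * i := by
              have h1 : n' * 1 ≤ n' * i := Nat.mul_le_mul_left n' hi
              omega
          _ = (e + n') * i := by ring
          _ ≤ s * i := Nat.mul_le_mul_right i hen'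
      -- j and k
      set j : ℕ := ((n' : ZMod p) * (s : ZMod p)⁻¹).val with hjdef
      have hjlt : j < p := ZMod.val_lt _
      have hszmod : (s : ZMod p) ≠ 0 := fun h =>
        hps ((ZMod.natCast_eq_zero_iff s p).mp h)
      have hsj : ((s * j : ℕ) : ZMod p) = ((n' : ℕ) : ZMod p) := by
        push_cast
        rw [hjdef, ZMod.natCast_val, ZMod.cast_id]
        rw [mul_comm ((n' : ZMod p)) _, ← mul_assoc, mul_inv_cancel₀ hszmod, one_mul]
      have hdvd : (p:ℤ) ∣ ((s:ℤ) * (j:ℤ) - (n':ℤ)) := by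
        rw [← ZMod.intCast_zmod_eq_zero_iff_dvd]
        push_cast
        rw [sub_eq_zero]
        exact_mod_cast hsj
      obtain ⟨k, hk⟩ := hdvd
      -- c, d, r
      set c : K := b * t ^ (n' : ℕ) with hcdef
      have hvc : v c = 0 := by
        rw [hcdef, v.map_mul, hvt, ← hz]
        have : z + (n' : ℤ) = 0 := by omega
        exact_mod_cast this
      obtain ⟨d, hd0, hd1⟩ := hperf c (le_of_eq hvc.symm)
      set r : K := (c - d ^ p) / t ^ (n' : ℕ) with hrdef
      have hrt : r * t ^ (n' : ℕ) = c - d ^ p := by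
        rw [hrdef, div_mul_cancel₀ _ (pow_ne_zero _ ht0)]
      have hvr : (-(n:ℤ) : WithTop ℤ) ≤ v r := by
        by_cases hcd : c - d ^ p = 0
        · rw [hrdef, hcd, zero_div, v.map_zero]
          exact le_top
        have h1 : (1 : WithTop ℤ) ≤ v (c - d ^ p) := hone _ hd1
        have h2 : v r + ((n' : ℤ) : WithTop ℤ) = v (c - d ^ p) := by
          rw [← hvt n', ← v.map_mul, hrt]
        by_cases hr0 : r = 0
        · rw [hr0, v.map_zero]; exact le_top
        obtain ⟨y, hy⟩ := WithTop.ne_top_iff_exists.mp (v.ne_top_iff.mpr hr0)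
        obtain ⟨x, hx⟩ := WithTop.ne_top_iff_exists.mp (v.ne_top_iff.mpr hcd)
        rw [← hy, ← hx] at h2
        rw [← hx] at h1
        rw [← hy]
        have h1' : (1:ℤ) ≤ x := by exact_mod_cast h1
        have h2' : y + (n' : ℤ) = x := by exact_mod_cast h2
        have : -(n:ℤ) ≤ y := by omega
        exact_mod_cast this
      obtain ⟨ur, wr, hur, hr⟩ :=
        IH (lt_of_le_of_lt (Nat.mul_le_mul_left p (Nat.le_succ n)) hbound) r hvr
      -- the element w and the correction terms
      set w : L := algebraMap K L d * τ ^ (k : ℤ) * α ^ j with hwdef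
      set F : ℕ → L := fun i =>
        algebraMap K L ((j.choose i : K) * d ^ p * t ^ (s*i - e*i - n')) * β ^ i with hFdef
      set T : L := ∑ i ∈ Finset.Icc 1 j, F i with hTdef
      have hTint : IsIntegral O T := by
        have : T ∈ integralClosure O L := by
          rw [hTdef]
          refine Subalgebra.sum_mem _ (fun i _ => ?_)
          have hcoef : 0 ≤ v ((j.choose i : K) * d ^ p * t ^ (s*i - e*i - n')) := by
            rw [v.map_mul, v.map_mul, v.map_pow]
            have hnatc : (0 : WithTop ℤ) ≤ v ((j.choose i : ℕ) : K) :=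
              natCast_mem O (j.choose i)
            refine add_nonneg (add_nonneg hnatc ?_) (hvtn _)
            exact nsmul_nonneg hd0 p
          exact (hintO _ hcoef).mul (hβint.pow i)
        exact this
      -- the main algebraic identity
      have hne : τ ^ (n' : ℕ) ≠ 0 := pow_ne_zero _ hτ0
      have hcL : algebraMap K L b * τ ^ (n' : ℕ) = algebraMap K L c := by
        rw [hcdef, map_mul, map_pow, hτdef]
      have hrL : algebraMap K L r * τ ^ (n' : ℕ)
          = algebraMap K L c - algebraMap K L d ^ p := by
        rw [hτdef, ← map_pow, ← map_mul, hrt, map_sub, map_pow]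
      have hwp : w ^ p * τ ^ (n' : ℕ)
          = algebraMap K L d ^ p * (τ ^ (s:ℕ) * α + 1) ^ j := by
        rw [hwdef, mul_pow, mul_pow]
        have hz1 : (τ ^ (k : ℤ)) ^ p * τ ^ (n' : ℕ) = τ ^ ((s * j : ℕ) : ℤ) := by
          rw [← zpow_natCast (τ ^ (k:ℤ)) p, ← zpow_mul, ← zpow_natCast τ (n' : ℕ),
            ← zpow_add₀ hτ0]
          congr 1
          push_cast
          linear_combination -hk
        have hz2 : (α ^ j) ^ p = (α ^ p) ^ j := by
          rw [← pow_mul, ← pow_mul, Nat.mul_comm]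
        calc (algebraMap K L d) ^ p * (τ ^ (k:ℤ)) ^ p * (α ^ j) ^ p * τ ^ (n' : ℕ)
            = (algebraMap K L d) ^ p * ((τ ^ (k:ℤ)) ^ p * τ ^ (n' : ℕ)) * (α ^ p) ^ j := by
              rw [hz2]; ring
          _ = (algebraMap K L d) ^ p * τ ^ (s * j : ℕ) * (α + τ ^ (-(s:ℤ))) ^ j := by
              rw [hz1, hα, zpow_natCast]
          _ = (algebraMap K L d) ^ p * ((τ ^ (s:ℕ)) ^ j * (α + τ ^ (-(s:ℤ))) ^ j) := by
              rw [← pow_mul]; ring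
          _ = (algebraMap K L d) ^ p * (τ ^ (s:ℕ) * α + 1) ^ j := by
              rw [← mul_pow]
              congr 2
              rw [mul_add, hτs]
      have hFτ : ∀ i ∈ Finset.Icc 1 j, F i * τ ^ (n' : ℕ)
          = algebraMap K L d ^ p * (τ ^ (s:ℕ) * α) ^ i * (j.choose i : L) := by
        intro i hi
        rw [Finset.mem_Icc] at hi
        have hai : s*i - e*i - n' + (e*i + n') = s*i := by
          have := hie i hi.1
          omega
        have hτcomb : τ ^ (s*i) = τ ^ (s*i - e*i - n') * (τ ^ (e*i) * τ ^ (n' : ℕ)) := by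
          rw [← pow_add, ← pow_add, hai]
        rw [hFdef]
        simp only [map_mul, map_pow, map_natCast, ← hτdef]
        rw [hβdef, mul_pow (τ ^ (s:ℕ)) α i, mul_pow (τ ^ e) α i, ← pow_mul, ← pow_mul,
          hτcomb]
        ring
      have hEq : algebraMap K L b = w ^ p + algebraMap K L r - T := by
        apply mul_right_cancel₀ hne
        rw [hcL, sub_mul, add_mul, hwp, hrL]
        have hT : T * τ ^ (n' : ℕ)
            = ∑ i ∈ Finset.Icc 1 j, algebraMap K L d ^ p * (τ ^ (s:ℕ) * α) ^ i
                * (j.choose i : L) := by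
          rw [hTdef, Finset.sum_mul]
          exact Finset.sum_congr rfl hFτ
        have hbinom : (τ ^ (s:ℕ) * α + 1) ^ j
            = ∑ i ∈ Finset.range (j+1), (τ ^ (s:ℕ) * α) ^ i * (j.choose i : L) := by
          rw [add_pow]
          exact Finset.sum_congr rfl (fun i _ => by rw [one_pow, mul_one])
        have hrange : Finset.range (j+1) = insert 0 (Finset.Icc 1 j) := by
          ext x
          simp only [Finset.mem_range, Finset.mem_insert, Finset.mem_Icc]
          omega
        have hsplit : algebraMap K L d ^ p * (τ ^ (s:ℕ) * α + 1) ^ j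
            = algebraMap K L d ^ p
              + ∑ i ∈ Finset.Icc 1 j, algebraMap K L d ^ p * (τ ^ (s:ℕ) * α) ^ i
                  * (j.choose i : L) := by
          rw [hbinom, Finset.mul_sum, hrange, Finset.sum_insert (by simp)]
          simp only [pow_zero, Nat.choose_zero_right, Nat.cast_one, one_mul, mul_one]
          congr 1
          exact Finset.sum_congr rfl (fun i _ => by ring)
        rw [hT, hsplit]
        ring
      refine ⟨ur - T, w + wr, hur.sub hTint, ?_⟩
      rw [hEq, hr, add_pow_char]
      ring
  -- conclude
  obtain ⟨u, w', hu, heq⟩ := key m (by rw [Nat.mul_comm]; exact hs) a (le_of_eq ha.symm)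
  refine ⟨u, w', ?_, heq⟩
  obtain ⟨g, hgmon, hgev⟩ := hu
  refine ⟨g.map O.subtype, hgmon.map _, fun i => ?_, ?_⟩
  · rw [Polynomial.coeff_map]
    exact (g.coeff i).2
  · rw [aeval_def, eval₂_map]
    exact hgev
end

section
/- Let k be a perfect field of characteristic p > 0, K = k((t)) the field of formal Laurent series over k with its normalized t-adic valuation v, and 𝒪_K = k⟦t⟧. Let a ∈ K with v(a) = −m < 0 and p ∤ m. Let s ∈ ℕ with p ∤ s and (p−1)s > mp, and let L = K_{℘, t^{−s}} be the splitting field over K of T^p − T − t^{−s}. Then there exist u in the integral closure 𝒪_L of k⟦t⟧ in L and w ∈ L such that a = u + w^p. -/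
open Polynomial
namespace Statement2Aux

variable {k : Type} [Field k] {L : Type} [Field L]
  [Algebra (LaurentSeries k) L] [Algebra (PowerSeries k) L]
  [IsScalarTower (PowerSeries k) (LaurentSeries k) L]

lemma single_eq_map (j : ℤ) (hj : 0 ≤ j) (d : k) :
    (HahnSeries.single j d : LaurentSeries k)
      = algebraMap (PowerSeries k) (LaurentSeries k)
          (PowerSeries.X ^ j.toNat * PowerSeries.C d) := by
  rw [LaurentSeries.coe_algebraMap, map_mul, HahnSeries.ofPowerSeries_X_pow,
    HahnSeries.ofPowerSeries_C, HahnSeries.C_apply, HahnSeries.single_mul_single,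
    add_zero, one_mul, Int.toNat_of_nonneg hj]

lemma isIntegral_single (j : ℤ) (hj : 0 ≤ j) (d : k) :
    IsIntegral (PowerSeries k) (algebraMap (LaurentSeries k) L (HahnSeries.single j d)) := by
  rw [single_eq_map j hj d, ← IsScalarTower.algebraMap_apply]
  exact isIntegral_algebraMap

lemma key_single (p : ℕ) (hp : p.Prime)
    (hperf : ∀ x : k, ∃ y : k, y ^ p = x)
    (s m : ℕ) (hps : ¬ p ∣ s) (hs : m * p < (p - 1) * s)
    (β : L)
    (hβ : β ^ p = β + algebraMap (LaurentSeries k) L (HahnSeries.single (-(s : ℤ)) 1))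
    (hγ : IsIntegral (PowerSeries k)
      (algebraMap (LaurentSeries k) L (HahnSeries.single (s : ℤ) 1) * β))
    (n : ℕ) (hn1 : 1 ≤ n) (hnm : n ≤ m) (c : k) :
    ∃ u w : L, IsIntegral (PowerSeries k) u ∧
      algebraMap (LaurentSeries k) L (HahnSeries.single (-(n : ℤ)) c) = u + w ^ p := by
  haveI : Fact p.Prime := ⟨hp⟩
  set z := algebraMap (LaurentSeries k) L with hzdef
  set T : L := z (HahnSeries.single (-(s : ℤ)) 1) with hT
  set γ : L := z (HahnSeries.single (s : ℤ) 1) * β with hγdef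
  have hs' : (m : ℤ) * p < ((p : ℤ) - 1) * s := by
    have h := hs
    zify [hp.one_le] at h
    exact h
  have hTγ : z (HahnSeries.single (-(s : ℤ)) 1) * z (HahnSeries.single (s : ℤ) 1) = 1 := by
    rw [← map_mul, HahnSeries.single_mul_single, neg_add_cancel, one_mul,
      HahnSeries.single_zero_one, map_one]
  have hβT : β + T = T * (1 + γ) := by
    rw [mul_add, mul_one, hγdef, hT, ← mul_assoc, hTγ, one_mul, add_comm]
  -- integrality of the interesting terms
  have hterm : ∀ i : ℕ, 1 ≤ i → ∀ d : k,
      IsIntegral (PowerSeries k) (z (HahnSeries.single ((s : ℤ) * i - n) d) * β ^ i) := by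
    intro i hi d
    refine IsIntegral.of_pow hp.pos ?_
    have hxp : (z (HahnSeries.single ((s : ℤ) * i - n) d) * β ^ i) ^ p
        = z (HahnSeries.single ((p : ℤ) * ((s : ℤ) * i - n) + (i : ℤ) * (-(s : ℤ))) (d ^ p))
            * (1 + γ) ^ i := by
      rw [mul_pow, ← map_pow, HahnSeries.single_pow, ← pow_mul, mul_comm i p, pow_mul, hβ, hβT,
        mul_pow, hT, ← map_pow, HahnSeries.single_pow, one_pow, ← mul_assoc, ← map_mul,
        HahnSeries.single_mul_single, mul_one, nsmul_eq_mul, nsmul_eq_mul]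
    rw [hxp]
    have hE : 0 ≤ (p : ℤ) * ((s : ℤ) * i - n) + (i : ℤ) * (-(s : ℤ)) := by
      have h1 : (1 : ℤ) ≤ i := by exact_mod_cast hi
      have h2 : (n : ℤ) ≤ m := by exact_mod_cast hnm
      have h3 : (0 : ℤ) ≤ s := by positivity
      have h4 : (1 : ℤ) ≤ p := by exact_mod_cast hp.one_le
      nlinarith [mul_le_mul_of_nonneg_left h2 (by linarith : (0:ℤ) ≤ (p:ℤ)),
        mul_le_mul_of_nonneg_right h1 (mul_nonneg (by linarith : (0:ℤ) ≤ (p:ℤ) - 1) h3)]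
    exact (isIntegral_single _ hE _).mul ((isIntegral_one.add hγ).pow i)
  by_cases hdvd : p ∣ n
  · -- p divides n : a pure p-th power
    obtain ⟨q, rfl⟩ := hdvd
    obtain ⟨c', hc'⟩ := hperf c
    refine ⟨0, z (HahnSeries.single (-(q : ℤ)) c'), isIntegral_zero, ?_⟩
    rw [zero_add, ← map_pow, HahnSeries.single_pow, hc']
    congr 2
    · rw [nsmul_eq_mul]; push_cast; ring
  · -- p does not divide n
    set f : ℕ := ((n : ZMod p) * (s : ZMod p)⁻¹).val with hfdef
    have hspos : (s : ZMod p) ≠ 0 := by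
      intro h
      rw [ZMod.natCast_eq_zero_iff] at h
      exact hps h
    have hfs : ((f : ZMod p)) * (s : ZMod p) = (n : ZMod p) := by
      rw [hfdef]
      simp only [ZMod.natCast_val, ZMod.cast_id]
      field_simp
    have hdvd2 : (p : ℤ) ∣ ((f : ℤ) * s - n) := by
      rw [← ZMod.intCast_zmod_eq_zero_iff_dvd]
      push_cast
      rw [hfs]
      ring
    set e : ℤ := ((f : ℤ) * s - n) / p with hedef
    have he : (p : ℤ) * e = (f : ℤ) * s - n := Int.mul_ediv_cancel' hdvd2
    obtain ⟨c', hc'⟩ := hperf c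
    set w : L := z (HahnSeries.single e c') * β ^ f with hwdef
    have hw : w ^ p = ∑ i ∈ Finset.range (f + 1),
        z (HahnSeries.single ((s : ℤ) * i - n) c) * β ^ i * (f.choose i : L) := by
      rw [hwdef, mul_pow, ← map_pow, HahnSeries.single_pow, hc', ← pow_mul, mul_comm f p, pow_mul,
        hβ, add_pow, Finset.mul_sum]
      refine Finset.sum_congr rfl fun i hi => ?_
      have hif : i ≤ f := Finset.mem_range_succ_iff.mp hi
      have hTfi : T ^ (f - i) = z (HahnSeries.single (((f - i : ℕ) : ℤ) * (-(s : ℤ))) 1) := by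
        rw [hT, ← map_pow, HahnSeries.single_pow, one_pow, nsmul_eq_mul]
      rw [hTfi]
      have : z (HahnSeries.single (p • e) c) *
            (β ^ i * z (HahnSeries.single (((f - i : ℕ) : ℤ) * (-(s : ℤ))) 1) * (f.choose i : L))
          = (z (HahnSeries.single (p • e) c) *
              z (HahnSeries.single (((f - i : ℕ) : ℤ) * (-(s : ℤ))) 1)) * β ^ i
              * (f.choose i : L) := by ring
      have hexp : p • e + ((f - i : ℕ) : ℤ) * (-(s : ℤ)) = (s : ℤ) * i - n := by
        rw [nsmul_eq_mul, Nat.cast_sub hif]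
        push_cast
        linarith [he]
      rw [this, ← map_mul, HahnSeries.single_mul_single, mul_one, hexp]
    refine ⟨-∑ i ∈ Finset.range f,
        z (HahnSeries.single ((s : ℤ) * (i + 1) - n) c) * β ^ (i + 1) * (f.choose (i + 1) : L),
      w, ?_, ?_⟩
    · refine IsIntegral.neg ?_
      refine IsIntegral.sum _ fun i _ => ?_
      refine IsIntegral.mul ?_ ?_
      · have := hterm (i + 1) (by omega) c
        push_cast at this ⊢
        exact this
      · rw [show ((f.choose (i + 1) : L)) = algebraMap (PowerSeries k) L (f.choose (i + 1) : PowerSeries k) by rw [map_natCast]]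
        exact isIntegral_algebraMap
    · rw [hw, Finset.sum_range_succ']
      push_cast
      simp only [Nat.choose_zero_right, Nat.cast_one, mul_one, pow_zero, Nat.cast_zero,
        mul_zero, zero_sub]
      ring

lemma tpow_neg_s (s : ℕ) :
    ((algebraMap (PowerSeries k) (LaurentSeries k) PowerSeries.X) ^ (-(s : ℤ)) : LaurentSeries k)
      = HahnSeries.single (-(s : ℤ)) 1 := by
  have hX : algebraMap (PowerSeries k) (LaurentSeries k) PowerSeries.X
      = HahnSeries.single (1 : ℤ) 1 := by
    rw [LaurentSeries.coe_algebraMap, HahnSeries.ofPowerSeries_X]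
  rw [hX, zpow_neg, zpow_natCast, HahnSeries.single_pow, nsmul_eq_mul, mul_one, one_pow]
  refine inv_eq_of_mul_eq_one_left ?_
  rw [HahnSeries.single_mul_single, neg_add_cancel, one_mul, HahnSeries.single_zero_one]

end Statement2Aux

open Statement2Aux

set_option maxHeartbeats 1000000

/-- Let `k` be a perfect field of characteristic `p > 0`, `K = k((t))` the
field of formal Laurent series with its normalized `t`-adic valuation `v` and valuation
ring `k⟦t⟧`.  Let `a ∈ K` with `v(a) = -m < 0` and `p ∤ m`.  Let `s ∈ ℕ` with `p ∤ s` and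
`(p-1)s > mp`, and let `L = K_{℘, t^{-s}}` be the splitting field of `T^p - T - t^{-s}`
over `K`.  Then there exist `u` in the integral closure of `k⟦t⟧` in `L` and `w ∈ L` such
that `a = u + w^p`. -/
theorem statement_2 (p : ℕ) (hp : p.Prime) (k : Type) [Field k] [CharP k p]
    (hperf : ∀ x : k, ∃ y : k, y ^ p = x)
    (a : LaurentSeries k) (m : ℕ) (hm : 0 < m)
    (ha : HahnSeries.addVal ℤ k a = ((-(m : ℤ) : ℤ) : WithTop ℤ)) (hpm : ¬ p ∣ m)
    (s : ℕ) (hps : ¬ p ∣ s) (hs : m * p < (p - 1) * s)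
    (L : Type) [Field L] [Algebra (LaurentSeries k) L]
    (hL : IsSplittingField (LaurentSeries k) L
      (X ^ p - X -
        C ((algebraMap (PowerSeries k) (LaurentSeries k) PowerSeries.X) ^ (-(s : ℤ)))))
    [Algebra (PowerSeries k) L] [IsScalarTower (PowerSeries k) (LaurentSeries k) L] :
    ∃ u w : L, IsIntegral (PowerSeries k) u ∧ algebraMap (LaurentSeries k) L a = u + w ^ p := by
  haveI : Fact p.Prime := ⟨hp⟩
  haveI : CharP (LaurentSeries k) p :=
    charP_of_injective_ringHom (HahnSeries.C_injective (Γ := ℤ) (R := k)) p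
  haveI : CharP L p := charP_of_injective_algebraMap
    (algebraMap (LaurentSeries k) L).injective p
  set z := algebraMap (LaurentSeries k) L with hzdef
  -- the root β of X^p - X - t^{-s}
  have hsplit := hL.splits
  rw [tpow_neg_s s] at hsplit
  have hdeg : (X ^ p - X - C (HahnSeries.single (-(s : ℤ)) (1 : k)) :
      (LaurentSeries k)[X]).degree ≠ 0 := by
    have hre : (X ^ p - X - C (HahnSeries.single (-(s : ℤ)) (1 : k)) : (LaurentSeries k)[X])
        = X ^ p - (X + C (HahnSeries.single (-(s : ℤ)) (1 : k))) := by abel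
    rw [hre, degree_sub_eq_left_of_degree_lt, degree_X_pow]
    · exact_mod_cast hp.ne_zero
    · rw [degree_X_pow, degree_X_add_C]
      · exact_mod_cast hp.one_lt
  obtain ⟨β, hβ0⟩ := hsplit.exists_eval_eq_zero (by rwa [degree_map])
  have hβ : β ^ p = β + z (HahnSeries.single (-(s : ℤ)) 1) := by
    simp only [eval_map, eval₂_sub, eval₂_X_pow, eval₂_X, eval₂_C] at hβ0
    rw [hzdef]
    linear_combination hβ0
  -- γ = t^s β is integral
  have hA : algebraMap (PowerSeries k) L (PowerSeries.X ^ (s * (p - 1)))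
      = z (HahnSeries.single ((s * (p - 1) : ℕ) : ℤ) 1) := by
    rw [IsScalarTower.algebraMap_apply (PowerSeries k) (LaurentSeries k) L]
    congr 1
    rw [LaurentSeries.coe_algebraMap, HahnSeries.ofPowerSeries_X_pow]
  have hγ : IsIntegral (PowerSeries k) (z (HahnSeries.single (s : ℤ) 1) * β) := by
    refine ⟨X ^ p - (C (PowerSeries.X ^ (s * (p - 1))) * X + C (PowerSeries.X ^ (s * (p - 1)))),
      ?_, ?_⟩
    · apply monic_X_pow_sub
      exact lt_of_le_of_lt degree_linear_le (by exact_mod_cast hp.one_lt)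
    · simp only [eval₂_sub, eval₂_add, eval₂_mul, eval₂_X_pow, eval₂_X, eval₂_C]
      rw [hA, mul_pow, ← map_pow, HahnSeries.single_pow, one_pow, hβ, nsmul_eq_mul]
      have h1 : z (HahnSeries.single ((p : ℤ) * s) 1) * (β + z (HahnSeries.single (-(s : ℤ)) 1))
          = z (HahnSeries.single (((s * (p - 1) : ℕ) : ℤ) + s) 1) * β
            + z (HahnSeries.single ((s * (p - 1) : ℕ) : ℤ) 1) := by
        have hc : ((s * (p - 1) : ℕ) : ℤ) = (s : ℤ) * p - s := by
          push_cast [Nat.cast_sub hp.one_le]; ring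
        rw [mul_add, ← map_mul, HahnSeries.single_mul_single, mul_one, hc]
        ring_nf
      rw [h1]
      rw [show z (HahnSeries.single (((s * (p - 1) : ℕ) : ℤ) + s) 1)
          = z (HahnSeries.single ((s * (p - 1) : ℕ) : ℤ) 1) * z (HahnSeries.single (s : ℤ) 1) by
        rw [← map_mul, HahnSeries.single_mul_single, mul_one]]
      ring
  -- key step for single monomials
  have key := key_single p hp hperf s m hps hs β hβ hγ
  -- main induction on the pole order
  have main : ∀ N : ℕ, N ≤ m → ∀ b : LaurentSeries k, (b = 0 ∨ -(N : ℤ) ≤ b.order) →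
      ∃ u w : L, IsIntegral (PowerSeries k) u ∧ z b = u + w ^ p := by
    intro N
    induction N with
    | zero =>
      intro _ b hb
      rcases eq_or_ne b 0 with rfl | hb0
      · exact ⟨0, 0, isIntegral_zero, by simp [zero_pow hp.ne_zero]⟩
      have hord : 0 ≤ b.order := by
        rcases hb with h | h
        · exact absurd h hb0
        · simpa using h
      refine ⟨algebraMap (PowerSeries k) L
        (PowerSeries.X ^ b.order.toNat * b.powerSeriesPart), 0, isIntegral_algebraMap, ?_⟩
      rw [zero_pow hp.ne_zero, add_zero,
        IsScalarTower.algebraMap_apply (PowerSeries k) (LaurentSeries k) L]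
      congr 1
      rw [LaurentSeries.coe_algebraMap]
      exact (LaurentSeries.X_order_mul_powerSeriesPart
        (by rw [Int.toNat_of_nonneg hord])).symm
    | succ N ih =>
      intro hNm b hb
      rcases eq_or_ne b 0 with rfl | hb0
      · exact ⟨0, 0, isIntegral_zero, by simp [zero_pow hp.ne_zero]⟩
      have hbord : -((N : ℤ) + 1) ≤ b.order := by
        rcases hb with h | h
        · exact absurd h hb0
        · push_cast at h; exact h
      rcases le_or_gt (-(N : ℤ)) b.order with hge | hlt
      · exact ih (by omega) b (Or.inr hge)
      have hord : b.order = -((N : ℤ) + 1) := by omega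
      set c := b.coeff b.order with hcdef
      set b' := b - HahnSeries.single b.order c with hb'def
      have hb'cases : b' = 0 ∨ -(N : ℤ) ≤ b'.order := by
        rcases eq_or_ne b' 0 with h | h
        · exact Or.inl h
        right
        by_contra hcon
        push_neg at hcon
        have h1 : b'.order ≤ b.order := by omega
        have h2 : b'.coeff b'.order = 0 := by
          rcases lt_or_eq_of_le h1 with hlt2 | heq
          · rw [hb'def, HahnSeries.coeff_sub, HahnSeries.coeff_eq_zero_of_lt_order hlt2,
              HahnSeries.coeff_single_of_ne (ne_of_lt hlt2), sub_zero]
          · rw [hb'def, HahnSeries.coeff_sub, heq, HahnSeries.coeff_single_same, hcdef, sub_self]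
        exact h (HahnSeries.coeff_order_eq_zero.mp h2)
      obtain ⟨u₁, w₁, hu₁, h₁⟩ := key (N + 1) (by omega) (by omega) c
      obtain ⟨u₂, w₂, hu₂, h₂⟩ := ih (by omega) b' hb'cases
      refine ⟨u₁ + u₂, w₁ + w₂, hu₁.add hu₂, ?_⟩
      have hordc : b.order = -((N + 1 : ℕ) : ℤ) := by push_cast; omega
      have hbsum : b = HahnSeries.single (-((N + 1 : ℕ) : ℤ)) c + b' := by
        rw [hb'def, ← hordc]
        abel
      rw [hbsum, map_add, h₁, h₂, add_pow_char]
      ring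
  have ha0 : a ≠ 0 := by
    intro h
    rw [h] at ha
    rw [HahnSeries.addVal_apply, HahnSeries.orderTop_zero] at ha
    exact (WithTop.top_ne_coe) ha
  have horda : a.order = -(m : ℤ) := by
    rw [HahnSeries.addVal_apply_of_ne ha0] at ha
    exact_mod_cast ha
  exact main m le_rfl a (Or.inr (le_of_eq horda.symm))
end

section
/- Let K be a field of characteristic p > 0 with a normalized discrete valuation v and valuation ring 𝒪_K. Let K̂ denote the completion of K with respect to v, with extended valuation v̂ and valuation ring 𝒪_{K̂}. If a ∈ K and there exist û ∈ 𝒪_{K̂} and ŵ ∈ K̂ with a = û + ŵ^p in K̂, then there exist u ∈ 𝒪_K and w ∈ K with a = u + w^p. (Equivalently, the natural map K/(𝒪_K + K^p) → K̂/(𝒪_{K̂} + K̂^p) is injective.) -/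
open Polynomial

/-- Let `K` be a field of characteristic `p > 0` with a normalized discrete
valuation `v` and valuation ring `𝒪_K`, and let `K̂` be its completion (a valued field with
valuation `v̂` extending `v`, into which `K` embeds densely).  If `a ∈ K` can be written as
`a = û + ŵ^p` with `û ∈ 𝒪_{K̂}` and `ŵ ∈ K̂`, then `a = u + w^p` for some `u ∈ 𝒪_K`, `w ∈ K`. -/
theorem statement_3 (p : ℕ) (hp : p.Prime) (K : Type) [Field K] [CharP K p]
    (v : AddValuation K (WithTop ℤ)) (hv : IsNormalizedVal v)
    (Khat : Type) [Field Khat]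
    (vhat : AddValuation Khat (WithTop ℤ)) (hvhat : IsNormalizedVal vhat)
    (ι : K →+* Khat)
    (hext : ∀ x : K, vhat (ι x) = v x)
    (hdense : ∀ (y : Khat) (n : ℤ), ∃ x : K, (n : WithTop ℤ) < vhat (y - ι x))
    (a : K) (uh wh : Khat) (hu : 0 ≤ vhat uh) (heq : ι a = uh + wh ^ p) :
    ∃ u w : K, 0 ≤ v u ∧ a = u + w ^ p := by
  haveI : CharP Khat p := charP_of_injective_ringHom ι.injective p
  haveI : Fact p.Prime := ⟨hp⟩
  obtain ⟨w, hw⟩ := hdense wh 0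
  refine ⟨a - w ^ p, w, ?_, by ring⟩
  rw [← hext]
  have h1 : ι (a - w ^ p) = uh + (wh - ι w) ^ p := by
    rw [map_sub, map_pow, heq, sub_pow_char]
    ring
  have h2 : (0 : WithTop ℤ) ≤ vhat ((wh - ι w) ^ p) := by
    rw [vhat.map_pow]
    exact nsmul_nonneg (le_of_lt (by exact_mod_cast hw)) p
  rw [h1]
  exact le_trans (le_min hu h2) (vhat.map_add _ _)
end

section
/- Let K be a field of characteristic p > 0 with a normalized discrete valuation v and valuation ring 𝒪_K. Let L/K be a finite separable field extension and let a ∈ K with v(a) < 0 and p ∤ v(a). If there exist u in the integral closure 𝒪_L of 𝒪_K in L and l ∈ L such that a = u + l^p, then p divides the degree [L : K]. -/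
open Polynomial

section AuxStatement4
open scoped Multiplicative

section AuxVal

variable {K : Type*} [Field K] (v : AddValuation K (WithTop ℤ))

lemma auxval_exists_int {x : K} (hx : x ≠ 0) : ∃ k : ℤ, v x = (k : WithTop ℤ) := by
  have h := v.ne_top_iff.mpr hx
  cases hvx : v x with
  | top => exact absurd hvx h
  | coe k => exact ⟨k, rfl⟩

lemma auxval_inv {x : K} {k : ℤ} (hx : x ≠ 0) (h : v x = (k : WithTop ℤ)) :
    v x⁻¹ = ((-k : ℤ) : WithTop ℤ) := by
  obtain ⟨j, hj⟩ := auxval_exists_int v (inv_ne_zero hx)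
  have hm : v (x * x⁻¹) = v x + v x⁻¹ := v.map_mul _ _
  rw [mul_inv_cancel₀ hx, v.map_one, h, hj, ← WithTop.coe_add] at hm
  rw [hj]
  have : (0 : ℤ) = k + j := WithTop.coe_injective hm
  norm_cast
  omega

/-- The valuation subring attached to an additive valuation. -/
def valSubring : ValuationSubring K where
  carrier := {x | 0 ≤ v x}
  one_mem' := by simp only [Set.mem_setOf_eq, v.map_one, le_refl]
  mul_mem' := by
    intro a b ha hb
    simp only [Set.mem_setOf_eq, v.map_mul] at *
    exact add_nonneg ha hb
  zero_mem' := by simp only [Set.mem_setOf_eq, v.map_zero]; exact le_top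
  add_mem' := by
    intro a b ha hb
    exact le_trans (le_min ha hb) (v.map_add a b)
  neg_mem' := by
    intro a ha
    simpa only [Set.mem_setOf_eq, v.map_neg] using ha
  mem_or_inv_mem' := by
    intro x
    by_cases hx : x = 0
    · left; show (0 : WithTop ℤ) ≤ v x; rw [hx, v.map_zero]; exact le_top
    obtain ⟨k, hk⟩ := auxval_exists_int v hx
    rcases le_or_gt 0 k with h | h
    · left; show (0 : WithTop ℤ) ≤ v x; rw [hk]; exact_mod_cast h
    · right; show (0 : WithTop ℤ) ≤ v x⁻¹
      rw [auxval_inv v hx hk]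
      exact_mod_cast (by omega : (0:ℤ) ≤ -k)

lemma mem_valSubring {x : K} : x ∈ valSubring v ↔ 0 ≤ v x := Iff.rfl

lemma auxval_pow {x : K} {k : ℤ} (h : v x = (k : WithTop ℤ)) (m : ℕ) :
    v (x ^ m) = ((m * k : ℤ) : WithTop ℤ) := by
  induction m with
  | zero => simp [v.map_one]
  | succ m ih =>
    rw [pow_succ, v.map_mul, ih, h, ← WithTop.coe_add]
    congr 1
    push_cast
    ring

theorem valSubring_pid : IsPrincipalIdealRing (valSubring v) := by
  constructor
  intro I
  by_cases hI : I = ⊥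
  · exact hI ▸ ⟨⟨0, (Ideal.span_zero).symm⟩⟩
  obtain ⟨x, hxI, hx0⟩ := (Submodule.ne_bot_iff I).mp hI
  have hx0' : (x : K) ≠ 0 := fun h => hx0 (Subtype.ext h)
  set T : Set ℕ := {k : ℕ | ∃ y : valSubring v, y ∈ I ∧ (y : K) ≠ 0 ∧
    v (y : K) = ((k : ℤ) : WithTop ℤ)} with hT
  have hTne : T.Nonempty := by
    obtain ⟨k, hk⟩ := auxval_exists_int v hx0'
    have h0k : (0 : ℤ) ≤ k := by
      have h2 := x.2
      rw [mem_valSubring, hk] at h2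
      exact_mod_cast h2
    exact ⟨k.toNat, x, hxI, hx0', by rw [hk]; congr 1; omega⟩
  obtain ⟨x₀, hx₀I, hx₀0, hx₀v⟩ := Nat.sInf_mem hTne
  refine ⟨⟨x₀, le_antisymm ?_ ?_⟩⟩
  · intro y hyI
    by_cases hy0 : y = 0
    · simp [hy0]
    have hy0' : (y : K) ≠ 0 := fun h => hy0 (Subtype.ext h)
    obtain ⟨j, hj⟩ := auxval_exists_int v hy0'
    have h0j : (0 : ℤ) ≤ j := by
      have h2 := y.2
      rw [mem_valSubring, hj] at h2
      exact_mod_cast h2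
    have hjT : j.toNat ∈ T := ⟨y, hyI, hy0', by rw [hj]; congr 1; omega⟩
    have hk₀j : ((sInf T : ℕ) : ℤ) ≤ j := by
      have := Nat.sInf_le hjT
      omega
    have hz : (0 : WithTop ℤ) ≤ v ((y : K) * (x₀ : K)⁻¹) := by
      rw [v.map_mul, hj, auxval_inv v hx₀0 hx₀v, ← WithTop.coe_add]
      have h5 : (0:ℤ) ≤ j + -((sInf T : ℕ) : ℤ) := by omega
      exact_mod_cast h5
    refine Ideal.mem_span_singleton'.mpr ⟨⟨_, hz⟩, ?_⟩
    apply Subtype.ext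
    show (y : K) * (x₀ : K)⁻¹ * (x₀ : K) = (y : K)
    field_simp
  · rw [show (Submodule.span (valSubring v) {x₀} : Ideal (valSubring v)) = Ideal.span {x₀} from rfl,
      Ideal.span_le, Set.singleton_subset_iff]
    exact hx₀I

lemma valSubring_pi_mem {π : K} (hπ : v π = ((1:ℤ) : WithTop ℤ)) : π ∈ valSubring v := by
  rw [mem_valSubring, hπ]; exact_mod_cast zero_le_one

lemma valSubring_mem_span_pi_iff {π : K} (hπ : v π = ((1:ℤ) : WithTop ℤ)) {x : valSubring v} :
    x ∈ Ideal.span {(⟨π, valSubring_pi_mem v hπ⟩ : valSubring v)} ↔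
      ((1:ℤ) : WithTop ℤ) ≤ v (x : K) := by
  constructor
  · intro hx
    obtain ⟨z, hz⟩ := Ideal.mem_span_singleton'.mp hx
    have : (x : K) = (z : K) * π := by rw [← hz]; rfl
    rw [this, v.map_mul, hπ]
    calc ((1:ℤ) : WithTop ℤ) = 0 + ((1:ℤ) : WithTop ℤ) := by rw [zero_add]
    _ ≤ v (z : K) + ((1:ℤ) : WithTop ℤ) := by
        exact add_le_add_left (show (0 : WithTop ℤ) ≤ v (z : K) from z.2) _
  · intro hx
    by_cases hx0 : (x : K) = 0
    · have : x = 0 := Subtype.ext hx0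
      rw [this]; exact Ideal.zero_mem _
    have hπ0 : π ≠ 0 := by
      intro h; rw [h, v.map_zero] at hπ; exact (WithTop.coe_ne_top (a := (1:ℤ))) hπ.symm
    obtain ⟨k, hk⟩ := auxval_exists_int v hx0
    have h1k : (1:ℤ) ≤ k := by rw [hk] at hx; exact_mod_cast hx
    have hz : (0 : WithTop ℤ) ≤ v ((x : K) * π⁻¹) := by
      rw [v.map_mul, hk, auxval_inv v hπ0 hπ, ← WithTop.coe_add]
      have h5 : (0:ℤ) ≤ k + -1 := by omega
      exact_mod_cast h5
    refine Ideal.mem_span_singleton'.mpr ⟨⟨_, hz⟩, ?_⟩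
    apply Subtype.ext
    show (x : K) * π⁻¹ * π = (x : K)
    field_simp

lemma valSubring_span_pi_isMaximal {π : K} (hπ : v π = ((1:ℤ) : WithTop ℤ)) :
    (Ideal.span {(⟨π, valSubring_pi_mem v hπ⟩ : valSubring v)}).IsMaximal := by
  rw [Ideal.isMaximal_iff]
  constructor
  · intro h1
    have := (valSubring_mem_span_pi_iff v hπ).mp h1
    rw [show ((1 : valSubring v) : K) = (1 : K) from rfl, v.map_one] at this
    exact absurd this (by exact_mod_cast (by omega : ¬ ((1:ℤ) ≤ 0)))
  · intro J x hMJ hxM hxJ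
    have hx0 : (x : K) ≠ 0 := by
      intro h
      exact hxM ((valSubring_mem_span_pi_iff v hπ).mpr (by rw [h, v.map_zero]; exact le_top))
    obtain ⟨k, hk⟩ := auxval_exists_int v hx0
    have h0k : (0:ℤ) ≤ k := by
      have h2 := x.2; rw [mem_valSubring, hk] at h2; exact_mod_cast h2
    have hk1 : ¬ ((1:ℤ) ≤ k) := by
      intro h
      exact hxM ((valSubring_mem_span_pi_iff v hπ).mpr (by rw [hk]; exact_mod_cast h))
    have hk0 : k = 0 := by omega
    have hinv : (0 : WithTop ℤ) ≤ v (x : K)⁻¹ := by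
      rw [auxval_inv v hx0 hk, hk0]
      simp
    have : (1 : valSubring v) = ⟨(x : K)⁻¹, hinv⟩ * x := by
      apply Subtype.ext
      show (1 : K) = (x : K)⁻¹ * x
      field_simp
    rw [this]
    exact Ideal.mul_mem_left _ _ hxJ

end AuxVal

set_option synthInstance.maxHeartbeats 1000000 in
set_option maxHeartbeats 2000000 in
theorem statement_4' (p : ℕ) (hp : p.Prime) (K : Type) [Field K] [CharP K p]
    (v : AddValuation K (WithTop ℤ)) (hv : ∀ n : ℤ, ∃ x : K, v x = (n : WithTop ℤ))
    (L : Type) [Field L] [Algebra K L] [FiniteDimensional K L] [Algebra.IsSeparable K L]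
    (a : K) (n : ℤ) (han : v a = (n : WithTop ℤ)) (hneg : n < 0) (hpn : ¬ (p : ℤ) ∣ n)
    (u l : L) (hu : ∃ g : Polynomial K, g.Monic ∧ (∀ i, (0 : WithTop ℤ) ≤ v (g.coeff i)) ∧
      Polynomial.aeval u g = 0)
    (heq : algebraMap K L a = u + l ^ p) :
    p ∣ Module.finrank K L := by
  classical
  obtain ⟨π, hπ⟩ := hv 1
  set R := valSubring v with hRdef
  haveI : IsPrincipalIdealRing R := valSubring_pid v
  letI : Algebra R L := ((algebraMap K L).comp (algebraMap R K)).toAlgebra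
  haveI : IsScalarTower R K L := IsScalarTower.of_algebraMap_eq fun x => rfl
  set S := integralClosure R L with hSdef
  haveI : IsFractionRing S L :=
    IsIntegralClosure.isFractionRing_of_finite_extension R K L S
  haveI : IsDedekindDomain S := integralClosure.isDedekindDomain R K (L := L)
  haveI : Module.Finite R S := IsIntegralClosure.finite R K L S
  set πR : R := ⟨π, valSubring_pi_mem v hπ⟩ with hπRdef
  set M : Ideal R := Ideal.span {πR} with hMdef
  haveI hMmax : M.IsMaximal := valSubring_span_pi_isMaximal v hπ
  have hπ0 : π ≠ 0 := by
    intro h; rw [h, v.map_zero] at hπ; exact (WithTop.coe_ne_top (a := (1:ℤ))) hπ.symm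
  have hM0 : M ≠ ⊥ := by
    intro h
    rw [hMdef, Ideal.span_singleton_eq_bot] at h
    exact hπ0 (congrArg Subtype.val h)
  rw [← Ideal.sum_ramification_inertia S K L hM0]
  apply Finset.dvd_sum
  intro P hPmem
  -- basic facts about P
  have halg_inj : Function.Injective (algebraMap R S) := by
    have h1 : Function.Injective (algebraMap R L) := by
      have : algebraMap R L = (algebraMap K L).comp (algebraMap R K) := rfl
      rw [this]
      exact (algebraMap K L).injective.comp (IsFractionRing.injective R K)
    rw [IsScalarTower.algebraMap_eq R S L, RingHom.coe_comp] at h1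
    exact Function.Injective.of_comp h1
  have hI0 : Ideal.map (algebraMap R S) M ≠ ⊥ := by
    rw [Ne, Ideal.map_eq_bot_iff_of_injective halg_inj]
    exact hM0
  have hPprime : Prime P :=
    UniqueFactorizationMonoid.prime_of_factor _ (Multiset.mem_toFinset.mp hPmem)
  haveI hPisPrime : P.IsPrime := Ideal.isPrime_of_prime hPprime
  have hP0 : P ≠ ⊥ := hPprime.ne_zero
  set w : IsDedekindDomain.HeightOneSpectrum S := ⟨P, hPisPrime, hP0⟩ with hwdef
  set e := Ideal.ramificationIdx' M P with hedef
  have he : e = (UniqueFactorizationMonoid.normalizedFactors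
      (Ideal.map (algebraMap R S) M)).count P :=
    Ideal.IsDedekindDomain.ramificationIdx'_eq_normalizedFactors_count hI0 hPisPrime hP0
  have he1 : 1 ≤ e := by
    rw [he]
    rw [← UniqueFactorizationMonoid.factors_eq_normalizedFactors]
    exact Multiset.one_le_count_iff_mem.mpr (Multiset.mem_toFinset.mp hPmem)
  -- the element c = a⁻¹
  have ha0 : a ≠ 0 := by
    intro h
    rw [h, v.map_zero] at han
    exact (WithTop.coe_ne_top (a := n)) han.symm
  set m : ℕ := (-n).toNat with hmdef
  have hmn : (m : ℤ) = -n := by omega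
  have hm1 : 1 ≤ m := by omega
  have hc : v a⁻¹ = ((m : ℤ) : WithTop ℤ) := by rw [auxval_inv v ha0 han, hmn]
  have hcmem : a⁻¹ ∈ R := by rw [mem_valSubring, hc]; exact_mod_cast (by omega : (0:ℤ) ≤ (m:ℤ))
  set cR : R := ⟨a⁻¹, hcmem⟩ with hcRdef
  have hc0 : a⁻¹ ≠ 0 := inv_ne_zero ha0
  -- claim B : span {cR} = M ^ m
  have hπm : v (π ^ m) = ((m : ℤ) : WithTop ℤ) := by
    rw [auxval_pow v hπ m]; norm_num
  have hπm0 : π ^ m ≠ 0 := pow_ne_zero _ hπ0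
  have hεval : v (a⁻¹ * (π ^ m)⁻¹) = ((0:ℤ) : WithTop ℤ) := by
    rw [v.map_mul, hc, auxval_inv v hπm0 hπm, ← WithTop.coe_add]
    congr 1
    ring
  have hεmem : a⁻¹ * (π ^ m)⁻¹ ∈ R := by
    rw [mem_valSubring, hεval]; exact_mod_cast le_refl (0:ℤ)
  set εR : R := ⟨a⁻¹ * (π ^ m)⁻¹, hεmem⟩ with hεdef
  have hεunit : IsUnit εR := by
    have hε0 : a⁻¹ * (π ^ m)⁻¹ ≠ 0 := mul_ne_zero hc0 (inv_ne_zero hπm0)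
    have hinvval : v (a⁻¹ * (π ^ m)⁻¹)⁻¹ = ((0:ℤ) : WithTop ℤ) := by
      rw [auxval_inv v hε0 hεval]; norm_num
    have hinvmem : (a⁻¹ * (π ^ m)⁻¹)⁻¹ ∈ R := by
      rw [mem_valSubring, hinvval]; exact_mod_cast le_refl (0:ℤ)
    refine isUnit_iff_exists_inv.mpr ⟨⟨_, hinvmem⟩, ?_⟩
    apply Subtype.ext
    show (a⁻¹ * (π ^ m)⁻¹) * (a⁻¹ * (π ^ m)⁻¹)⁻¹ = 1
    field_simp
  have hcfact : cR = εR * πR ^ m := by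
    apply Subtype.ext
    show a⁻¹ = (a⁻¹ * (π ^ m)⁻¹) * π ^ m
    field_simp
  have hspanc : Ideal.span {cR} = M ^ m := by
    rw [hcfact, Ideal.span_singleton_mul_left_unit hεunit, hMdef,
      ← Ideal.span_singleton_pow]
  -- map to S
  set cS : S := algebraMap R S cR with hcSdef
  have hspancS : Ideal.span {cS} = (Ideal.map (algebraMap R S) M) ^ m := by
    rw [← Ideal.map_pow, ← hspanc, Ideal.map_span, Set.image_singleton]
  have hcS0 : cS ≠ 0 := by
    intro h
    have h2 : algebraMap R S cR = algebraMap R S 0 := by rw [map_zero]; exact h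
    exact hc0 (congrArg Subtype.val (halg_inj h2 : cR = 0))
  -- count of P in span {cS}
  have hcount : (UniqueFactorizationMonoid.normalizedFactors
      (Ideal.span {cS})).count P = m * e := by
    rw [hspancS, UniqueFactorizationMonoid.normalizedFactors_pow, Multiset.count_nsmul, he]
  -- int valuation of cS
  have hspancS0 : Ideal.span {cS} ≠ (0 : Ideal S) := by
    rw [Ne, Ideal.zero_eq_bot, Ideal.span_singleton_eq_bot]
    exact hcS0
  have hvcS : w.intValuation cS =
      ((Multiplicative.ofAdd (-(m * e : ℤ)) : Multiplicative ℤ) : WithZero (Multiplicative ℤ)) := by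
    rw [IsDedekindDomain.HeightOneSpectrum.intValuation_apply,
      IsDedekindDomain.HeightOneSpectrum.intValuationDef_if_neg _ hcS0]
    congr 2
    rw [count_associates_factors_eq hspancS0 hPisPrime hP0]
    rw [hcount]
    push_cast
    ring
  -- valuation of algebraMap K L a
  have halgc : algebraMap S L cS = algebraMap K L a⁻¹ := by
    rw [hcSdef, ← IsScalarTower.algebraMap_apply R S L]
    rfl
  have hwc : w.valuation L (algebraMap K L a⁻¹) =
      ((Multiplicative.ofAdd (-(m * e : ℤ)) : Multiplicative ℤ) : WithZero (Multiplicative ℤ)) := by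
    rw [← halgc, IsDedekindDomain.HeightOneSpectrum.valuation_of_algebraMap, hvcS]
  have hwa : w.valuation L (algebraMap K L a) =
      ((Multiplicative.ofAdd ((m * e : ℤ)) : Multiplicative ℤ) : WithZero (Multiplicative ℤ)) := by
    have h1 : (algebraMap K L a)⁻¹ = algebraMap K L a⁻¹ := by
      rw [map_inv₀]
    have h2 := congrArg (·⁻¹) hwc
    simp only [← h1, map_inv₀, inv_inv] at h2
    rw [h2, ← WithZero.coe_inv, ← ofAdd_neg, neg_neg]
  -- u is integral
  have huS : u ∈ S := by
    obtain ⟨g, hmonic, hcoeff, hgu⟩ := hu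
    have hcoeffs : (↑g.coeffs : Set K) ⊆ (R.toSubring : Set K) := by
      intro x hx
      simp only [Finset.coe_sort_coe, Polynomial.coeffs, Finset.mem_coe,
        Finset.mem_image] at hx
      obtain ⟨i, _, rfl⟩ := hx
      exact hcoeff i
    set gT := g.toSubring R.toSubring hcoeffs with hgTdef
    refine ⟨gT, (Polynomial.monic_toSubring _ _ _).mpr hmonic, ?_⟩
    have hmap : gT.map (Subring.subtype R.toSubring) = g := Polynomial.map_toSubring _ _ _
    have : Polynomial.eval₂ (algebraMap K L) u (gT.map (Subring.subtype R.toSubring)) = 0 := by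
      rw [hmap]
      exact hgu
    rw [Polynomial.eval₂_map] at this
    exact this
  have hwu : w.valuation L u ≤ 1 := by
    have := w.valuation_le_one (K := L) (⟨u, huS⟩ : S)
    exact this
  -- valuation of l ^ p
  have hme1 : (1 : WithZero (Multiplicative ℤ)) < ((Multiplicative.ofAdd ((m * e : ℤ)) : Multiplicative ℤ) : WithZero (Multiplicative ℤ)) := by
    rw [← WithZero.coe_one]
    rw [WithZero.coe_lt_coe]
    rw [← ofAdd_zero]
    rw [Multiplicative.ofAdd_lt]
    positivity
  have hlp : w.valuation L (l ^ p) =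
      ((Multiplicative.ofAdd ((m * e : ℤ)) : Multiplicative ℤ) : WithZero (Multiplicative ℤ)) := by
    have hldef : l ^ p = algebraMap K L a - u := by rw [heq]; ring
    rw [hldef, Valuation.map_sub_eq_of_lt_left, hwa]
    rw [hwa]
    exact lt_of_le_of_lt hwu hme1
  have hl0 : l ≠ 0 := by
    intro h
    rw [h, zero_pow hp.ne_zero, Valuation.map_zero] at hlp
    exact WithZero.zero_ne_coe hlp
  obtain ⟨x, hx⟩ := WithZero.ne_zero_iff_exists.mp ((Valuation.ne_zero_iff _).mpr hl0 :
    w.valuation L l ≠ 0)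
  have hpow : (w.valuation L l) ^ p = w.valuation L (l ^ p) := (map_pow _ _ _).symm
  rw [← hx, hlp, ← WithZero.coe_pow, WithZero.coe_inj] at hpow
  have hkey : (p : ℤ) * Multiplicative.toAdd x = (m : ℤ) * e := by
    have := congrArg Multiplicative.toAdd hpow
    simpa [toAdd_pow, mul_comm] using this
  have hpdvd : (p : ℤ) ∣ (m : ℤ) * (e : ℤ) := ⟨Multiplicative.toAdd x, hkey.symm⟩
  have hpm : ¬ ((p : ℤ) ∣ (m : ℤ)) := by
    intro h
    rw [hmn] at h
    exact hpn (dvd_neg.mp h)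
  have hpe : (p : ℤ) ∣ (e : ℤ) := ((Int.Prime.dvd_mul' (by exact_mod_cast hp) hpdvd).resolve_left hpm)
  have hpe' : p ∣ e := by exact_mod_cast hpe
  exact Dvd.dvd.mul_right hpe' _

end AuxStatement4

/-- Let `K` be a field of characteristic `p > 0` with a normalized discrete
valuation `v` and valuation ring `𝒪_K`.  Let `L/K` be a finite separable field extension
and `a ∈ K` with `v(a) < 0` and `p ∤ v(a)`.  If there exist `u` in the integral closure
`𝒪_L` of `𝒪_K` in `L` and `l ∈ L` with `a = u + l^p`, then `p` divides `[L : K]`. -/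
theorem statement_4 (p : ℕ) (hp : p.Prime) (K : Type) [Field K] [CharP K p]
    (v : AddValuation K (WithTop ℤ)) (hv : IsNormalizedVal v)
    (L : Type) [Field L] [Algebra K L] [FiniteDimensional K L] [Algebra.IsSeparable K L]
    (a : K) (n : ℤ) (han : v a = (n : WithTop ℤ)) (hneg : n < 0) (hpn : ¬ (p : ℤ) ∣ n)
    (u l : L) (hu : MemIntegralClosureOfVal v u)
    (heq : algebraMap K L a = u + l ^ p) :
    p ∣ Module.finrank K L := by
  exact statement_4' p hp K v hv L a n han hneg hpn u l hu heq
end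

section
/- Let K be a field of characteristic p > 0 with a normalized discrete valuation v, let L/K be a field extension and let v_L be a discrete valuation on L extending v, normalized so that v_L restricted to K^× equals e·v where e = e(v_L|v) is the ramification index. Let a ∈ K with v(a) < 0 and p ∤ v(a). If there exists l ∈ L with v_L(a + l^p) > 0, then p divides e(v_L|v). -/
open Polynomial

/-- Let `K` be a field of characteristic `p > 0` with a normalized discrete
valuation `v`, let `L/K` be a field extension and `v_L` a normalized discrete valuation on
`L` extending `v` with ramification index `e = e(v_L|v)` (i.e. `v_L|_{K^×} = e·v`).
Let `a ∈ K` with `v(a) < 0` and `p ∤ v(a)`.  If there exists `l ∈ L` with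
`v_L(a + l^p) > 0`, then `p` divides `e(v_L|v)`. -/
theorem statement_5 (p : ℕ) (hp : p.Prime) (K : Type) [Field K] [CharP K p]
    (v : AddValuation K (WithTop ℤ)) (hv : IsNormalizedVal v)
    (L : Type) [Field L] [Algebra K L]
    (vL : AddValuation L (WithTop ℤ)) (hvL : IsNormalizedVal vL)
    (e : ℤ) (he : 0 < e) (hext : ExtendsWith v vL e)
    (a : K) (n : ℤ) (han : v a = (n : WithTop ℤ)) (hneg : n < 0) (hpn : ¬ (p : ℤ) ∣ n)
    (l : L) (hl : 0 < vL (algebraMap K L a + l ^ p)) :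
    (p : ℤ) ∣ e := by
  set x := algebraMap K L a with hx
  have hxa : vL x = ((e * n : ℤ) : WithTop ℤ) := hext a n han
  have hen : e * n < 0 := mul_neg_of_pos_of_neg he hneg
  have hlt : vL (-x) < vL (x + l ^ p) := by
    rw [AddValuation.map_neg, hxa]
    exact lt_trans (by exact_mod_cast hen) hl
  have hyp : vL (l ^ p) = ((e * n : ℤ) : WithTop ℤ) := by
    have h1 := AddValuation.map_add_eq_of_lt_left vL hlt
    rw [AddValuation.map_neg, hxa] at h1
    rw [show (-x + (x + l ^ p)) = l ^ p by ring] at h1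
    exact h1
  have hl0 : l ≠ 0 := by
    intro h0
    rw [h0, zero_pow hp.ne_zero, AddValuation.map_zero] at hyp
    exact (WithTop.coe_ne_top (a := (e*n:ℤ))) hyp.symm
  obtain ⟨m, hm⟩ : ∃ m : ℤ, vL l = (m : WithTop ℤ) := by
    have := (vL.ne_top_iff).mpr hl0
    exact Option.ne_none_iff_exists'.mp this
  have hpm : (p : ℤ) * m = e * n := by
    have : vL (l ^ p) = ((p * m : ℤ) : WithTop ℤ) := by
      have key : ∀ k : ℕ, k • ((m : ℤ) : WithTop ℤ) = (((k : ℤ) * m : ℤ) : WithTop ℤ) := by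
        intro k
        induction k with
        | zero => simp
        | succ k ih =>
          rw [succ_nsmul, ih, ← WithTop.coe_add]
          norm_cast
          push_cast
          ring
      rw [AddValuation.map_pow, hm, key]
    rw [hyp] at this
    exact_mod_cast this.symm
  have : (p : ℤ) ∣ e * n := ⟨m, hpm.symm⟩
  rcases (Int.Prime.dvd_mul' (by exact_mod_cast hp) this) with h | h
  · exact h
  · exact absurd h hpn
end

section
/- Let K be a field of characteristic p > 0 with a normalized discrete valuation v and perfect residue field. For every f ∈ K there exists g ∈ K such that either v(f + (g^p − g)) ≥ 0, or v(f + (g^p − g)) < 0 and p does not divide v(f + (g^p − g)). -/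
open Polynomial

lemma coe_succ_le {a : WithTop ℤ} {n : ℤ} (h : (n : WithTop ℤ) < a) :
    ((n + 1 : ℤ) : WithTop ℤ) ≤ a := by
  cases a with
  | top => exact le_top
  | coe m => exact_mod_cast h

lemma aux (p : ℕ) (hp : p.Prime) (K : Type) [Field K] [CharP K p]
    (v : AddValuation K (WithTop ℤ)) (hv : IsNormalizedVal v)
    (hperf : ResidueFieldPerfect p v) :
    ∀ N : ℕ, ∀ f : K, ∀ n : ℤ, v f = (n : WithTop ℤ) → n.natAbs ≤ N →
    ∃ g : K, (0 : WithTop ℤ) ≤ v (f + (g ^ p - g)) ∨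
      ∃ m : ℤ, v (f + (g ^ p - g)) = (m : WithTop ℤ) ∧ m < 0 ∧ ¬ (p : ℤ) ∣ m := by
  haveI : ExpChar K p := .prime hp
  haveI := Fact.mk hp
  intro N
  induction N with
  | zero =>
    intro f n hn hN
    have hn0 : n = 0 := by omega
    refine ⟨0, Or.inl ?_⟩
    rw [zero_pow hp.ne_zero, sub_zero, add_zero, hn, hn0]
    exact le_refl _
  | succ N ih =>
    intro f n hn hN
    by_cases h0 : 0 ≤ n
    · refine ⟨0, Or.inl ?_⟩
      rw [zero_pow hp.ne_zero, sub_zero, add_zero, hn]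
      exact_mod_cast h0
    push_neg at h0
    by_cases hdvd : (p : ℤ) ∣ n
    swap
    · refine ⟨0, Or.inr ⟨n, ?_, h0, hdvd⟩⟩
      rw [zero_pow hp.ne_zero, sub_zero, add_zero, hn]
    -- main case
    obtain ⟨q, hq⟩ := hdvd
    have hq0 : q < 0 := by
      rcases lt_trichotomy q 0 with h | h | h
      · exact h
      · rw [h, mul_zero] at hq; omega
      · nlinarith [hp.two_le]
    have hqn : n + 1 ≤ q := by nlinarith [hp.two_le]
    obtain ⟨x, hx⟩ := hv q
    have hx0 : x ≠ 0 := by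
      intro h; rw [h, AddValuation.map_zero] at hx; exact (WithTop.coe_ne_top hx.symm)
    have hf0 : f ≠ 0 := by
      intro h; rw [h, AddValuation.map_zero] at hn; exact (WithTop.coe_ne_top hn.symm)
    have hxp : v (x ^ p) = (n : WithTop ℤ) := by
      rw [AddValuation.map_pow, hx, hq]
      exact_mod_cast rfl
    set t : K := -(f / x ^ p) with ht
    have ht0 : t ≠ 0 := by
      simp only [ht, neg_ne_zero, div_ne_zero_iff]
      exact ⟨hf0, pow_ne_zero _ hx0⟩
    have hft : f = -(t * x ^ p) := by
      rw [ht, neg_mul, neg_neg, div_mul_cancel₀ _ (pow_ne_zero _ hx0)]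
    have hvt : v t = 0 := by
      obtain ⟨m, hm⟩ := (WithTop.ne_top_iff_exists).mp (v.ne_top_iff.mpr ht0)
      have : v f = v t + v (x ^ p) := by
        rw [hft, AddValuation.map_neg, AddValuation.map_mul]
      rw [hn, hxp, ← hm] at this
      have : (n : WithTop ℤ) = ((m + n : ℤ) : WithTop ℤ) := by
        rw [this]; push_cast; ring
      have : n = m + n := by exact_mod_cast this
      rw [← hm]
      have : m = 0 := by omega
      rw [this]; rfl
    obtain ⟨c, hc0, hct⟩ := hperf t (le_of_eq hvt.symm)
    set f' : K := f + ((c * x) ^ p - c * x) with hf'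
    have hkey : f + (c * x) ^ p = x ^ p * (c ^ p - t) := by
      rw [hft, ht]
      field_simp
      ring
    have hA : ((n + 1 : ℤ) : WithTop ℤ) ≤ v (f + (c * x) ^ p) := by
      rw [hkey, AddValuation.map_mul, hxp, AddValuation.map_sub_swap]
      apply coe_succ_le
      calc (n : WithTop ℤ) = (n : WithTop ℤ) + 0 := by rw [add_zero]
        _ < (n : WithTop ℤ) + v (t - c ^ p) :=
          WithTop.add_lt_add_left (WithTop.coe_ne_top) hct
    have hB : ((n + 1 : ℤ) : WithTop ℤ) ≤ v (c * x) := by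
      rw [AddValuation.map_mul, hx]
      calc ((n + 1 : ℤ) : WithTop ℤ) ≤ (q : WithTop ℤ) := by exact_mod_cast hqn
        _ = 0 + (q : WithTop ℤ) := by rw [zero_add]
        _ ≤ v c + (q : WithTop ℤ) := add_le_add hc0 le_rfl
    have hvf' : ((n + 1 : ℤ) : WithTop ℤ) ≤ v f' := by
      have : f' = (f + (c * x) ^ p) - c * x := by rw [hf']; ring
      rw [this]
      exact AddValuation.map_le_sub _ hA hB
    rcases eq_or_ne (v f') ⊤ with htop | hne
    · exact ⟨c * x, Or.inl (by rw [← hf', htop]; exact le_top)⟩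
    obtain ⟨m, hm⟩ := WithTop.ne_top_iff_exists.mp hne
    by_cases hm0 : 0 ≤ m
    · refine ⟨c * x, Or.inl ?_⟩
      rw [← hf', ← hm]
      exact_mod_cast hm0
    push_neg at hm0
    have hmn : n + 1 ≤ m := by
      rw [← hm] at hvf'
      exact_mod_cast hvf'
    obtain ⟨g', hg'⟩ := ih f' m hm.symm (by omega)
    refine ⟨c * x + g', ?_⟩
    have heq : f + ((c * x + g') ^ p - (c * x + g')) = f' + (g' ^ p - g') := by
      rw [add_pow_char, hf']; ring
    rw [heq]
    exact hg'


/-- Let `K` be a field of characteristic `p > 0` with a normalized discrete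
valuation `v` and perfect residue field.  For every `f ∈ K` there exists `g ∈ K` such that
either `v(f + (g^p - g)) ≥ 0`, or `v(f + (g^p - g)) < 0` and `p ∤ v(f + (g^p - g))`. -/
theorem statement_6 (p : ℕ) (hp : p.Prime) (K : Type) [Field K] [CharP K p]
    (v : AddValuation K (WithTop ℤ)) (hv : IsNormalizedVal v)
    (hperf : ResidueFieldPerfect p v) (f : K) :
    ∃ g : K, (0 : WithTop ℤ) ≤ v (f + (g ^ p - g)) ∨
      ∃ n : ℤ, v (f + (g ^ p - g)) = (n : WithTop ℤ) ∧ n < 0 ∧ ¬ (p : ℤ) ∣ n := by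
  rcases eq_or_ne (v f) ⊤ with htop | hne
  · exact ⟨0, Or.inl (by rw [zero_pow hp.ne_zero, sub_zero, add_zero, htop]; exact le_top)⟩
  obtain ⟨n, hn⟩ := WithTop.ne_top_iff_exists.mp hne
  exact aux p hp K v hv hperf n.natAbs f n hn.symm le_rfl
end

section
/- Let k be a perfect field of characteristic p > 0 and K = k((t)) the field of formal Laurent series over k. Every f ∈ K can be written as f = b + c + Σ_{n=1}^{N} b_n t^{−n} for some N ≥ 0, where b ∈ k⟦t⟧, c ∈ K^p is a p-th power in K, and the coefficients b_n ∈ k satisfy b_n = 0 whenever p divides n. In particular, every element of K is congruent modulo k⟦t⟧ + K^p to a finite sum of terms b_n t^{−n} with all exponents n prime to p. -/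
/-- Let `k` be a perfect field of characteristic `p > 0` and `K = k((t))`.
Every `f ∈ K` can be written `f = b + c + Σ_{n=1}^{N} b_n t^{-n}`, where `b ∈ k⟦t⟧`,
`c ∈ K^p` is a `p`-th power, and the coefficients `b_n ∈ k` vanish whenever `p ∣ n`. -/
theorem statement_7 (p : ℕ) (hp : p.Prime) (k : Type) [Field k] [CharP k p]
    (hperf : ∀ x : k, ∃ y : k, y ^ p = x)
    (f : LaurentSeries k) :
    ∃ (N : ℕ) (b : PowerSeries k) (c : LaurentSeries k) (coef : ℕ → k),
      (∀ n, p ∣ n → coef n = 0) ∧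
      f = algebraMap (PowerSeries k) (LaurentSeries k) b + c ^ p +
        ∑ n ∈ Finset.Icc 1 N, HahnSeries.single (-(n : ℤ)) (coef n) := by
  haveI : Fact p.Prime := ⟨hp⟩
  haveI : CharP (LaurentSeries k) p :=
    charP_of_injective_ringHom (f := HahnSeries.C) HahnSeries.C_injective p
  set N : ℕ := (-f.order).toNat with hN
  set a : ℕ → k := fun n => f.coeff (-(n : ℤ)) with ha
  choose y hy using fun n => hperf (a n)
  set coef : ℕ → k := fun n => if p ∣ n then 0 else a n with hcoef
  set D : Finset ℕ := (Finset.Icc 1 N).filter (p ∣ ·) with hD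
  refine ⟨N, PowerSeries.mk fun n => f.coeff n,
    ∑ n ∈ D, HahnSeries.single (-((n / p : ℕ) : ℤ)) (y n),
    coef, fun n hn => if_pos hn, ?_⟩
  have hcpow : (∑ n ∈ D, HahnSeries.single (-((n / p : ℕ) : ℤ)) (y n)) ^ p
      = ∑ n ∈ D, HahnSeries.single (-(n : ℤ)) (a n) := by
    rw [sum_pow_char]
    refine Finset.sum_congr rfl fun n hn => ?_
    have hdvd : p ∣ n := (Finset.mem_filter.mp hn).2
    rw [HahnSeries.single_pow, hy]
    congr 1
    rw [nsmul_eq_mul, mul_neg, ← Nat.cast_mul, Nat.mul_div_cancel' hdvd]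
  rw [hcpow]
  ext m
  have hsum : ∀ (s : Finset ℕ) (g : ℕ → LaurentSeries k),
      (∑ n ∈ s, g n).coeff m = ∑ n ∈ s, (g n).coeff m :=
    fun s g => map_sum (HahnSeries.coeff.addMonoidHom m) g s
  rw [HahnSeries.coeff_add, HahnSeries.coeff_add]
  have halg : (algebraMap (PowerSeries k) (LaurentSeries k)
        (PowerSeries.mk fun n => f.coeff n)).coeff m
      = if m < 0 then 0 else f.coeff (m.natAbs : ℤ) := by
    rw [show algebraMap (PowerSeries k) (LaurentSeries k)
        (PowerSeries.mk fun n => f.coeff n)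
        = ((PowerSeries.mk fun n => f.coeff (n : ℤ) : PowerSeries k) : LaurentSeries k) from rfl,
      PowerSeries.coeff_coe, PowerSeries.coeff_mk]
  by_cases hm : 0 ≤ m
  · have h1 : (∑ n ∈ D, HahnSeries.single (-(n : ℤ)) (a n)).coeff m = 0 := by
      rw [hsum]
      refine Finset.sum_eq_zero fun n hn => ?_
      have hn1 : 1 ≤ n := (Finset.mem_Icc.mp (Finset.mem_filter.mp hn).1).1
      rw [HahnSeries.coeff_single, if_neg (by omega)]
    have h2 : (∑ n ∈ Finset.Icc 1 N,
        HahnSeries.single (-(n : ℤ)) (coef n)).coeff m = 0 := by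
      rw [hsum]
      refine Finset.sum_eq_zero fun n hn => ?_
      have hn1 : 1 ≤ n := (Finset.mem_Icc.mp hn).1
      rw [HahnSeries.coeff_single, if_neg (by omega)]
    rw [halg, h1, h2, if_neg (by omega), Int.natAbs_of_nonneg hm, add_zero, add_zero]
  · push_neg at hm
    set n0 : ℕ := m.natAbs with hn0
    have hmn0 : m = -(n0 : ℤ) := by omega
    have key : ∀ (s : Finset ℕ) (g : ℕ → k),
        (∑ n ∈ s, HahnSeries.single (-(n : ℤ)) (g n)).coeff m
        = if n0 ∈ s then g n0 else 0 := by
      intro s g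
      rw [hsum]
      simp only [HahnSeries.coeff_single]
      trans ∑ n ∈ s, if n = n0 then g n else 0
      · exact Finset.sum_congr rfl fun n _ => by
          congr 1; simp only [eq_iff_iff]; omega
      · exact Finset.sum_ite_eq' s n0 g
    rw [halg, if_pos hm, key, key, zero_add]
    by_cases hle : n0 ≤ N
    · have hn1 : 1 ≤ n0 := by omega
      rw [if_pos (Finset.mem_Icc.mpr ⟨hn1, hle⟩)]
      by_cases hdvd : p ∣ n0
      · rw [if_pos (Finset.mem_filter.mpr ⟨Finset.mem_Icc.mpr ⟨hn1, hle⟩, hdvd⟩),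
          hcoef]
        simp only [if_pos hdvd, add_zero]
        rw [ha, hmn0]
      · rw [if_neg (fun h => hdvd (Finset.mem_filter.mp h).2), hcoef]
        simp only [if_neg hdvd, zero_add]
        rw [ha, hmn0]
    · rw [if_neg (fun h => hle (Finset.mem_Icc.mp h).2),
        if_neg (fun h => hle (Finset.mem_Icc.mp (Finset.mem_filter.mp h).1).2),
        add_zero]
      refine HahnSeries.coeff_eq_zero_of_lt_order ?_
      omega
end

section
/- Let K be a field of characteristic p > 0 with a normalized discrete valuation v, let t ∈ K be a uniformizer (v(t) = 1), and let s ∈ ℕ with p ∤ s. Let L = K_{℘, t^{−s}} be the splitting field of T^p − T − t^{−s} over K, v_L the normalized valuation on L extending v, x ∈ L with x^p − x = t^{−s}, and π = x^a t^b where a, b ∈ ℤ satisfy −s·a + p·b = 1. Then for every integer m > 0 with p ∤ m, one has v_L(1/t^m − 1/π^{mp}) = (p−1)s − mp; equivalently, 1/t^m = 1/π^{mp} + g for some g ∈ L with v_L(g) = (p−1)s − mp. -/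
open Polynomial

section Aux

variable {L : Type*} [Field L] (vL : AddValuation L (WithTop ℤ))

/-- `vL z = n` as an integer statement. -/
def Vv (z : L) (n : ℤ) : Prop := vL z = (n : WithTop ℤ)

variable {vL}

lemma Vv.eq {z : L} {n : ℤ} (h : Vv vL z n) : vL z = (n : WithTop ℤ) := h

lemma Vv_ne_zero {z : L} {n : ℤ} (h : Vv vL z n) : z ≠ 0 := by
  intro h0
  rw [Vv, h0, AddValuation.map_zero] at h
  exact (WithTop.coe_ne_top (a := n)) h.symm

lemma Vv_one : Vv vL (1 : L) 0 := by
  simp [Vv]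

lemma Vv_mul {z w : L} {n k : ℤ} (hz : Vv vL z n) (hw : Vv vL w k) :
    Vv vL (z * w) (n + k) := by
  show vL _ = _
  rw [AddValuation.map_mul, hz.eq, hw.eq, ← WithTop.coe_add]

lemma Vv_inv {z : L} {n : ℤ} (hz : Vv vL z n) : Vv vL z⁻¹ (-n) := by
  show vL _ = _
  rw [AddValuation.map_inv, hz.eq]
  rfl

lemma Vv_pow {z : L} {n : ℤ} (hz : Vv vL z n) (k : ℕ) : Vv vL (z ^ k) (k * n) := by
  induction k with
  | zero => simpa using Vv_one
  | succ k ih =>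
      show vL _ = _
      rw [pow_succ, AddValuation.map_mul, ih.eq, hz.eq, ← WithTop.coe_add]
      congr 1
      push_cast; ring

lemma Vv_zpow {z : L} {n : ℤ} (hz : Vv vL z n) (k : ℤ) : Vv vL (z ^ k) (k * n) := by
  rcases k.eq_nat_or_neg with ⟨j, rfl | rfl⟩
  · rw [zpow_natCast]; exact_mod_cast Vv_pow hz j
  · show vL _ = _
    rw [zpow_neg, zpow_natCast, (Vv_inv (Vv_pow hz j)).eq]
    congr 1
    ring

lemma Vv_add_left {z w : L} {n k : ℤ} (hz : Vv vL z n) (hw : Vv vL w k) (h : n < k) :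
    Vv vL (z + w) n := by
  show vL _ = _
  rw [AddValuation.map_add_eq_of_lt_left, hz.eq]
  rw [hz.eq, hw.eq]
  exact_mod_cast h

lemma Vv_sub_left {z w : L} {n k : ℤ} (hz : Vv vL z n) (hw : Vv vL w k) (h : n < k) :
    Vv vL (z - w) n := by
  show vL _ = _
  rw [AddValuation.map_sub_eq_of_lt_left, hz.eq]
  rw [hz.eq, hw.eq]
  exact_mod_cast h

lemma Vv_sub_right {z w : L} {n k : ℤ} (hz : Vv vL z n) (hw : Vv vL w k) (h : k < n) :
    Vv vL (z - w) k := by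
  show vL _ = _
  rw [AddValuation.map_sub_eq_of_lt_right, hw.eq]
  rw [hz.eq, hw.eq]
  exact_mod_cast h

lemma Vv_natCast {p : ℕ} (hp : p.Prime) [CharP L p] {c : ℕ} (hc : ¬ p ∣ c) :
    Vv vL (c : L) 0 := by
  haveI : ExpChar L p := ExpChar.prime hp
  have hc0 : (c : L) ≠ 0 := by
    rw [Ne, CharP.cast_eq_zero_iff L p c]; exact hc
  have hfix : (c : L) ^ p = (c : L) := by
    have := map_natCast (frobenius L p) c
    rwa [frobenius_def] at this
  have hne : vL (c : L) ≠ ⊤ := vL.ne_top_iff.mpr hc0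
  obtain ⟨n, hn⟩ := WithTop.ne_top_iff_exists.mp hne
  have hsm : ∀ (k : ℕ) (j : ℤ), (k • ((j : WithTop ℤ)) : WithTop ℤ) = ((k * j : ℤ) : WithTop ℤ) := by
    intro k j
    induction k with
    | zero => simp
    | succ k ih =>
        rw [succ_nsmul, ih, ← WithTop.coe_add]
        congr 1
        push_cast; ring
  have h2 : vL ((c : L) ^ p) = vL (c : L) := by rw [hfix]
  rw [AddValuation.map_pow, ← hn, hsm] at h2
  have h3 : (p : ℤ) * n = n := by exact_mod_cast h2
  have hn0 : n = 0 := by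
    have hp2 : (2 : ℤ) ≤ (p : ℤ) := by exact_mod_cast hp.two_le
    nlinarith [sq_nonneg n]
  have hres : vL (c : L) = ((0 : ℤ) : WithTop ℤ) := by rw [← hn, hn0]
  exact hres

section Eps

variable {ε : L} {e : ℤ} (he : Vv vL ε e) (hepos : 0 < e)
include he hepos

lemma Vv_one_add_eps : Vv vL (1 + ε) 0 := Vv_add_left Vv_one he hepos

lemma Vv_geom_ge (n : ℕ) : ((e : ℤ) : WithTop ℤ) ≤ vL ((1 + ε) ^ n - 1) := by
  induction n with
  | zero => simp
  | succ n ih =>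
      have hid : (1 + ε) ^ (n + 1) - 1 = ((1 + ε) ^ n - 1) + ε * (1 + ε) ^ n := by ring
      rw [hid]
      refine AddValuation.map_le_add vL ih ?_
      have h1 : Vv vL (ε * (1 + ε) ^ n) (e + n * 0) :=
        Vv_mul he (Vv_pow (Vv_one_add_eps he hepos) n)
      rw [h1.eq]
      have : (e : ℤ) = e + (n : ℤ) * 0 := by ring
      exact_mod_cast this.le

lemma Vv_geom_ge2 (n : ℕ) :
    ((2 * e : ℤ) : WithTop ℤ) ≤ vL ((1 + ε) ^ n - 1 - (n : L) * ε) := by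
  induction n with
  | zero => simp
  | succ n ih =>
      have hid : (1 + ε) ^ (n + 1) - 1 - ((n + 1 : ℕ) : L) * ε =
          ((1 + ε) ^ n - 1 - (n : L) * ε) + ε * ((1 + ε) ^ n - 1) := by
        push_cast; ring
      rw [hid]
      refine AddValuation.map_le_add vL ih ?_
      rw [AddValuation.map_mul, he.eq]
      calc ((2 * e : ℤ) : WithTop ℤ) = ((e : ℤ) : WithTop ℤ) + ((e : ℤ) : WithTop ℤ) := by
            rw [← WithTop.coe_add]; norm_cast; ring
        _ ≤ ((e : ℤ) : WithTop ℤ) + vL ((1 + ε) ^ n - 1) :=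
            add_le_add le_rfl (Vv_geom_ge he hepos n)

lemma Vv_geom_eq {p : ℕ} (hp : p.Prime) [CharP L p] {n : ℕ} (hn : ¬ p ∣ n) :
    Vv vL ((1 + ε) ^ n - 1) e := by
  have hsplit : (1 + ε) ^ n - 1 = (n : L) * ε + ((1 + ε) ^ n - 1 - (n : L) * ε) := by ring
  have hnε : Vv vL ((n : L) * ε) (0 + e) := Vv_mul (Vv_natCast hp hn) he
  have hbig : vL ((n : L) * ε) < vL ((1 + ε) ^ n - 1 - (n : L) * ε) := by
    rw [hnε.eq]
    refine lt_of_lt_of_le ?_ (Vv_geom_ge2 he hepos n)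
    exact_mod_cast (by linarith : (0 : ℤ) + e < 2 * e)
  show vL _ = _
  rw [hsplit, AddValuation.map_add_eq_of_lt_left vL hbig, hnε.eq]
  congr 1
  ring

lemma Vv_geom_eq_z {p : ℕ} (hp : p.Prime) [CharP L p] {a : ℤ} (ha : ¬ ((p : ℤ)) ∣ a) :
    Vv vL ((1 + ε) ^ a - 1) e := by
  have h1 : (1 + ε : L) ≠ 0 := Vv_ne_zero (Vv_one_add_eps he hepos)
  rcases a.eq_nat_or_neg with ⟨j, rfl | rfl⟩
  · rw [zpow_natCast]
    exact Vv_geom_eq he hepos hp (fun h => ha (Int.natCast_dvd_natCast.mpr h))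
  · have hj : ¬ p ∣ j := by
      intro h
      exact ha (dvd_neg.mpr (Int.natCast_dvd_natCast.mpr h))
    have hpw : ((1 + ε) ^ j : L) ≠ 0 := pow_ne_zero _ h1
    have hid : (1 + ε) ^ (-(j : ℤ)) - 1 = (1 - (1 + ε) ^ j) * ((1 + ε) ^ j)⁻¹ := by
      rw [zpow_neg, zpow_natCast]
      field_simp
    show vL _ = _
    rw [hid, AddValuation.map_mul, AddValuation.map_sub_swap,
      (Vv_geom_eq he hepos hp hj).eq, (Vv_inv (Vv_pow (Vv_one_add_eps he hepos) j)).eq,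
      ← WithTop.coe_add]
    norm_cast
    ring
    simp

end Eps

end Aux


/-- Let `K` have characteristic `p > 0` with normalized discrete valuation
`v`, uniformizer `t`, and let `s ∈ ℕ` with `p ∤ s`.  Let `L = K_{℘, t^{-s}}` be the
splitting field of `T^p - T - t^{-s}`, `v_L` the normalized valuation on `L` extending `v`
(with `v_L|_{K^×} = p·v`), `x ∈ L` with `x^p - x = t^{-s}`, and `π = x^a t^b` where
`-s·a + p·b = 1`.  Then for every integer `m > 0` with `p ∤ m`,
`v_L(1/t^m - 1/π^{mp}) = (p-1)s - mp`. -/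
theorem statement_14 (p : ℕ) (hp : p.Prime) (K : Type) [Field K] [CharP K p]
    (v : AddValuation K (WithTop ℤ)) (hv : IsNormalizedVal v)
    (t : K) (ht : v t = (1 : WithTop ℤ)) (s : ℕ) (hps : ¬ p ∣ s)
    (L : Type) [Field L] [Algebra K L]
    (hL : Polynomial.IsSplittingField K L
      (Polynomial.X ^ p - Polynomial.X - Polynomial.C (t ^ (-(s : ℤ)))))
    (vL : AddValuation L (WithTop ℤ)) (hvL : IsNormalizedVal vL)
    (hext : ExtendsWith v vL (p : ℤ))
    (x : L) (hx : x ^ p - x = algebraMap K L (t ^ (-(s : ℤ))))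
    (a b : ℤ) (hab : -(s : ℤ) * a + (p : ℤ) * b = 1)
    (m : ℕ) (hm : 0 < m) (hpm : ¬ p ∣ m) :
    vL (((algebraMap K L t) ^ m)⁻¹ - ((x ^ a * (algebraMap K L t) ^ b) ^ (m * p))⁻¹) =
      ((((p : ℤ) - 1) * (s : ℤ) - (m : ℤ) * (p : ℤ) : ℤ) : WithTop ℤ) := by
  haveI : CharP L p := charP_of_injective_algebraMap (algebraMap K L).injective p
  set t' := algebraMap K L t with ht'def
  have hT : Vv vL t' (p : ℤ) := by
    have h := hext t 1 ht
    simpa [Vv, ht'def] using h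
  have ht'0 : t' ≠ 0 := Vv_ne_zero hT
  have hyalg : algebraMap K L (t ^ (-(s : ℤ))) = t' ^ (-(s : ℤ)) :=
    map_zpow₀ (algebraMap K L) t _
  set y := t' ^ (-(s : ℤ)) with hydef
  have hy0 : y ≠ 0 := zpow_ne_zero _ ht'0
  have hVy : Vv vL y (-(s : ℤ) * p) := Vv_zpow hT _
  have hs : s ≠ 0 := fun h => hps (h ▸ dvd_zero p)
  have hs0 : (0 : ℤ) < s := by exact_mod_cast Nat.pos_of_ne_zero hs
  have hp2 : (2 : ℤ) ≤ p := by exact_mod_cast hp.two_le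
  have hx' : x ^ p - x = y := by rw [hx, hyalg]
  have hx0 : x ≠ 0 := by
    intro h0
    rw [h0] at hx'
    have : y = 0 := by simpa [zero_pow hp.ne_zero] using hx'.symm
    exact hy0 this
  obtain ⟨n, hn⟩ := WithTop.ne_top_iff_exists.mp (vL.ne_top_iff.mpr hx0)
  have hVx' : Vv vL x n := hn.symm
  have hVxp : Vv vL (x ^ p) ((p : ℤ) * n) := Vv_pow hVx' p
  have hn_eq : n = -(s : ℤ) := by
    rcases lt_trichotomy n 0 with hlt | heq | hgt
    · have hlt2 : (p : ℤ) * n < n := by nlinarith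
      have hsub : Vv vL (x ^ p - x) ((p : ℤ) * n) := Vv_sub_left hVxp hVx' hlt2
      have h2 : ((p : ℤ) * n : ℤ) = (-(s : ℤ) * p) := by
        have h3 := hsub.eq
        rw [hx', hVy.eq] at h3
        exact_mod_cast h3.symm
      have h4 : (p : ℤ) * n = (p : ℤ) * (-(s : ℤ)) := by linarith
      exact mul_left_cancel₀ (by positivity) h4
    · exfalso
      have hmin := vL.map_sub (x ^ p) x
      rw [hx', hVy.eq, hVxp.eq, hVx'.eq, heq] at hmin
      simp only [mul_zero, min_self] at hmin
      have h6 : ((0 : ℤ) : WithTop ℤ) ≤ ((-(s : ℤ) * (p : ℤ) : ℤ) : WithTop ℤ) := by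
        exact_mod_cast hmin
      have h7 : (0 : ℤ) ≤ -(s : ℤ) * (p : ℤ) := by exact_mod_cast h6
      nlinarith
    · exfalso
      have hlt2 : n < (p : ℤ) * n := by nlinarith
      have hsub : Vv vL (x ^ p - x) n := Vv_sub_right hVxp hVx' hlt2
      have h2 : (n : ℤ) = (-(s : ℤ) * p) := by
        have h3 := hsub.eq
        rw [hx', hVy.eq] at h3
        exact_mod_cast h3.symm
      nlinarith
  have hVx : Vv vL x (-(s : ℤ)) := hn_eq ▸ hVx'
  set e : ℤ := (s : ℤ) * p - s with he_def
  have hepos : 0 < e := by nlinarith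
  set ε := x * y⁻¹ with hεdef
  have hVε : Vv vL ε e := by
    have h := Vv_mul hVx (Vv_inv hVy)
    show vL _ = _
    rw [h.eq]
    congr 1
    ring
  have h1ε : x + y = y * (1 + ε) := by
    rw [hεdef]
    field_simp
    ring
  have hpa : ¬ ((p : ℤ)) ∣ a := by
    rintro ⟨k, rfl⟩
    have h1 : (1 : ℤ) = (p : ℤ) * (b - (s : ℤ) * k) := by rw [← hab]; ring
    have h2 : (p : ℤ) ∣ 1 := Dvd.intro _ h1.symm
    have := Int.le_of_dvd one_pos h2
    linarith
  have hgeo : Vv vL ((1 + ε) ^ a - 1) e := Vv_geom_eq_z hVε hepos hp hpa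
  set π := x ^ a * t' ^ b with hπdef
  have hVπ : Vv vL π 1 := by
    have h := Vv_mul (Vv_zpow hVx a) (Vv_zpow hT b)
    show vL _ = _
    rw [h.eq]
    congr 1
    rw [← hab]
    ring
  have hπ0 : π ≠ 0 := Vv_ne_zero hVπ
  have hxp_eq : x ^ p = x + y := by
    have := sub_eq_iff_eq_add.mp hx'
    rw [this]
    ring
  have hπp : π ^ p = t' * (1 + ε) ^ a := by
    have e1 : (x ^ a) ^ (p : ℕ) = (x ^ (p : ℕ)) ^ a := by
      rw [← zpow_natCast (x ^ a) p, ← zpow_mul, mul_comm, zpow_mul, zpow_natCast]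
    have e2 : (t' ^ b) ^ (p : ℕ) = t' ^ ((p : ℤ) * b) := by
      rw [← zpow_natCast (t' ^ b) p, ← zpow_mul, mul_comm]
    have e3 : (x + y) ^ a = y ^ a * (1 + ε) ^ a := by rw [h1ε, mul_zpow]
    have e4 : y ^ a = t' ^ (-(s : ℤ) * a) := by rw [hydef, ← zpow_mul]
    have e5 : t' ^ (-(s : ℤ) * a) * t' ^ ((p : ℤ) * b) = t' := by
      rw [← zpow_add₀ ht'0, hab, zpow_one]
    calc π ^ p = (x ^ a) ^ p * (t' ^ b) ^ p := mul_pow _ _ _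
      _ = (x + y) ^ a * t' ^ ((p : ℤ) * b) := by rw [e1, e2, hxp_eq]
      _ = (t' ^ (-(s : ℤ) * a) * t' ^ ((p : ℤ) * b)) * (1 + ε) ^ a := by
          rw [e3, e4]; ring
      _ = t' * (1 + ε) ^ a := by rw [e5]
  have hπpt : π ^ p - t' = t' * ((1 + ε) ^ a - 1) := by rw [hπp]; ring
  have hVd : Vv vL (π ^ p - t') ((p : ℤ) + e) := hπpt ▸ Vv_mul hT hgeo
  set u := π ^ p * t'⁻¹ with hudef
  have hVu1 : Vv vL (u - 1) e := by
    have hid : u - 1 = (π ^ p - t') * t'⁻¹ := by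
      rw [hudef]
      field_simp
    have h := Vv_mul hVd (Vv_inv hT)
    rw [hid]
    show vL _ = _
    rw [h.eq]
    congr 1
    ring
  have hgeo2 : Vv vL (u ^ m - 1) e := by
    have h := Vv_geom_eq hVu1 hepos hp hpm
    have h' : (1 : L) + (u - 1) = u := by ring
    rwa [h'] at h
  have hVu : Vv vL u 0 := by
    have h := Vv_mul (Vv_pow hVπ p) (Vv_inv hT)
    show vL _ = _
    rw [h.eq]
    congr 1
    ring
  have hu0 : u ≠ 0 := Vv_ne_zero hVu
  have hπmp : π ^ (m * p) = u ^ m * t' ^ m := by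
    have hup : π ^ p = u * t' := by
      rw [hudef]
      field_simp
    rw [pow_mul', hup, mul_pow]
  have hfin : (t' ^ m)⁻¹ - (π ^ (m * p))⁻¹ = (u ^ m - 1) * (u ^ m)⁻¹ * (t' ^ m)⁻¹ := by
    rw [hπmp]
    have hu' : (u ^ m : L) ≠ 0 := pow_ne_zero _ hu0
    have ht'' : (t' ^ m : L) ≠ 0 := pow_ne_zero _ ht'0
    field_simp
  have hVfinal := Vv_mul (Vv_mul hgeo2 (Vv_inv (Vv_pow hVu m))) (Vv_inv (Vv_pow hT m))
  rw [hfin]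
  show vL _ = _
  rw [hVfinal.eq]
  congr 1
  rw [he_def]
  ring
end

section
/- Let K be a field and let v_1, …, v_n be pairwise inequivalent nontrivial normalized discrete valuations on K. Then for every choice of integers s_1, …, s_n ∈ ℤ there exists f ∈ K with v_i(f) = s_i for all i = 1, …, n. -/
open Polynomial

section Helpers
variable {K : Type*} [Field K]

lemma val_exists_int (v : AddValuation K (WithTop ℤ)) {x : K} (hx : x ≠ 0) :
    ∃ m : ℤ, v x = (m : WithTop ℤ) := by
  have h : v x ≠ ⊤ := (AddValuation.ne_top_iff v).2 hx
  obtain ⟨m, hm⟩ := WithTop.ne_top_iff_exists.1 h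
  exact ⟨m, hm.symm⟩

lemma val_pow (v : AddValuation K (WithTop ℤ)) {x : K} {a : ℤ}
    (h : v x = (a : WithTop ℤ)) (m : ℕ) : v (x ^ m) = ((m * a : ℤ) : WithTop ℤ) := by
  induction m with
  | zero => simp
  | succ k ih =>
    rw [pow_succ, AddValuation.map_mul, ih, h, ← WithTop.coe_add]
    congr 1
    push_cast
    ring

lemma val_zpow (v : AddValuation K (WithTop ℤ)) {x : K} {a : ℤ} (hx : x ≠ 0)
    (h : v x = (a : WithTop ℤ)) (z : ℤ) : v (x ^ z) = ((z * a : ℤ) : WithTop ℤ) := by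
  cases z with
  | ofNat n => rw [Int.ofNat_eq_coe, zpow_natCast, val_pow v h]
  | negSucc n =>
    rw [zpow_negSucc, AddValuation.map_inv, val_pow v h, ← WithTop.LinearOrderedAddCommGroup.coe_neg]
    congr 1
    rw [Int.negSucc_eq]
    push_cast
    ring

lemma ne_zero_of_val_int {v : AddValuation K (WithTop ℤ)} {x : K} {m : ℤ}
    (h : v x = (m : WithTop ℤ)) : x ≠ 0 := by
  intro h0
  rw [h0, AddValuation.map_zero] at h
  exact (WithTop.top_ne_coe h).elim

lemma val_eq_of_le (v w : AddValuation K (WithTop ℤ)) (hv : IsNormalizedVal v)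
    (hw : IsNormalizedVal w) (h : ∀ x : K, 0 ≤ v x → 0 ≤ w x) : v = w := by
  obtain ⟨π, hπ⟩ := hv 1
  have hπ0 : π ≠ 0 := ne_zero_of_val_int hπ
  obtain ⟨e, he⟩ := val_exists_int w hπ0
  -- units go to units
  have hunit : ∀ x : K, x ≠ 0 → v x = (0 : WithTop ℤ) → w x = (0 : WithTop ℤ) := by
    intro x hx0 hx
    have h1 : (0 : WithTop ℤ) ≤ w x := h x (le_of_eq hx.symm)
    have h2 : (0 : WithTop ℤ) ≤ w x⁻¹ := by
      apply h
      rw [AddValuation.map_inv, hx]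
      simp
    rw [AddValuation.map_inv] at h2
    obtain ⟨k, hk⟩ := val_exists_int w hx0
    rw [hk] at h1 h2 ⊢
    rw [← WithTop.LinearOrderedAddCommGroup.coe_neg] at h2
    have h1' : (0:ℤ) ≤ k := by exact_mod_cast h1
    have h2' : (0:ℤ) ≤ -k := by exact_mod_cast h2
    have : k = 0 := by omega
    rw [this]; rfl
  -- main formula
  have hmain : ∀ (x : K), x ≠ 0 → ∀ m : ℤ, v x = (m : WithTop ℤ) →
      w x = ((m * e : ℤ) : WithTop ℤ) := by
    intro x hx0 m hm
    set y := x * π ^ (-m : ℤ) with hy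
    have hπm : π ^ (-m : ℤ) ≠ 0 := zpow_ne_zero _ hπ0
    have hy0 : y ≠ 0 := mul_ne_zero hx0 hπm
    have hvy : v y = (0 : WithTop ℤ) := by
      rw [hy, AddValuation.map_mul, hm, val_zpow v hπ0 hπ (-m), ← WithTop.coe_add]
      norm_num
    have hwy : w y = (0 : WithTop ℤ) := hunit y hy0 hvy
    have hxy : x = y * π ^ (m : ℤ) := by
      rw [hy, mul_assoc, zpow_neg, inv_mul_cancel₀ (zpow_ne_zero _ hπ0), mul_one]
    rw [hxy, AddValuation.map_mul, hwy, val_zpow w hπ0 he m, zero_add]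
  -- e = 1
  have he0 : (0:ℤ) ≤ e := by
    have := h π (by rw [hπ]; exact_mod_cast (zero_le_one : (0:ℤ) ≤ 1))
    rw [he] at this
    exact_mod_cast this
  obtain ⟨t, ht⟩ := hw 1
  have ht0 : t ≠ 0 := ne_zero_of_val_int ht
  obtain ⟨m, hm⟩ := val_exists_int v ht0
  have h1 : m * e = 1 := by
    have := hmain t ht0 m hm
    rw [ht] at this
    exact_mod_cast this.symm
  have he1 : e = 1 := Int.eq_one_of_mul_eq_one_right he0 (by linarith [h1, mul_comm m e])
  -- conclude
  ext x
  by_cases hx0 : x = 0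
  · rw [hx0, AddValuation.map_zero, AddValuation.map_zero]
  · obtain ⟨m, hm⟩ := val_exists_int v hx0
    rw [hm, hmain x hx0 m hm, he1, mul_one]

lemma ne_zero_of_val_lt {v : AddValuation K (WithTop ℤ)} {x : K} {c : WithTop ℤ}
    (h : v x < c) : x ≠ 0 := by
  intro h0
  rw [h0, AddValuation.map_zero] at h
  exact (not_top_lt h).elim

lemma exists_pair (v w : AddValuation K (WithTop ℤ)) (hv : IsNormalizedVal v)
    (hw : IsNormalizedVal w) (hne : v ≠ w) :
    ∃ c : K, v c < (0 : WithTop ℤ) ∧ (0 : WithTop ℤ) < w c := by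
  have hA : ∃ x : K, 0 ≤ w x ∧ v x < 0 := by
    by_contra hA
    push_neg at hA
    exact hne (val_eq_of_le w v hw hv hA).symm
  have hB : ∃ x : K, 0 ≤ v x ∧ w x < 0 := by
    by_contra hB
    push_neg at hB
    exact hne (val_eq_of_le v w hv hw hB)
  obtain ⟨y, hy1, hy2⟩ := hA
  obtain ⟨x, hx1, hx2⟩ := hB
  have hx0 : x ≠ 0 := ne_zero_of_val_lt hx2
  have hy0 : y ≠ 0 := ne_zero_of_val_lt hy2
  obtain ⟨p, hp⟩ := val_exists_int v hx0
  obtain ⟨q, hq⟩ := val_exists_int v hy0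
  obtain ⟨p', hp'⟩ := val_exists_int w hx0
  obtain ⟨q', hq'⟩ := val_exists_int w hy0
  refine ⟨y / x, ?_, ?_⟩
  · rw [AddValuation.map_div, hp, hq]
    have h1 : (0:ℤ) ≤ p := by exact_mod_cast hp ▸ hx1
    have h2 : q < 0 := by exact_mod_cast hq ▸ hy2
    exact_mod_cast (by omega : q - p < 0)
  · rw [AddValuation.map_div, hp', hq']
    have h1 : p' < 0 := by exact_mod_cast hp' ▸ hx2
    have h2 : (0:ℤ) ≤ q' := by exact_mod_cast hq' ▸ hy1
    exact_mod_cast (by omega : (0:ℤ) < q' - p')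

lemma exists_key {n : ℕ} (v : Fin n → AddValuation K (WithTop ℤ))
    (hv : ∀ i, IsNormalizedVal (v i)) (i : Fin n) (s : Finset (Fin n))
    (hs : ∀ j ∈ s, v j ≠ v i) :
    ∃ a : K, v i a < (0 : WithTop ℤ) ∧ ∀ j ∈ s, (0 : WithTop ℤ) < v j a := by
  classical
  revert hs
  refine Finset.induction_on s ?_ ?_
  · intro _
    obtain ⟨a, ha⟩ := hv i (-1)
    refine ⟨a, ?_, by simp⟩
    rw [ha]
    exact_mod_cast (show (-1:ℤ) < 0 by norm_num)
  · rintro k s' hk ih hs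
    have hki : v k ≠ v i := hs k (Finset.mem_insert_self k s')
    obtain ⟨b, hbi, hbs⟩ := ih (fun j hj => hs j (Finset.mem_insert_of_mem hj))
    obtain ⟨c, hci, hck⟩ := exists_pair (v i) (v k) (hv i) (hv k) hki.symm
    have hb0 : b ≠ 0 := ne_zero_of_val_lt hbi
    have hc0 : c ≠ 0 := ne_zero_of_val_lt hci
    obtain ⟨Bi, hBi⟩ := val_exists_int (v i) hb0
    obtain ⟨Ci, hCi⟩ := val_exists_int (v i) hc0
    obtain ⟨Ck, hCk⟩ := val_exists_int (v k) hc0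
    have hBi0 : Bi < 0 := by exact_mod_cast hBi ▸ hbi
    have hCi0 : Ci < 0 := by exact_mod_cast hCi ▸ hci
    have hCk0 : 0 < Ck := by exact_mod_cast hCk ▸ hck
    set M : ℕ := s'.sup (fun j => (-(WithTop.untopD 0 ((v j) c))).toNat) with hM
    have hMle : ∀ j ∈ s', ∀ Cj : ℤ, v j c = (Cj : WithTop ℤ) → -(M:ℤ) ≤ Cj := by
      intro j hj Cj hCj
      have h1 : (-(WithTop.untopD 0 ((v j) c))).toNat ≤ M :=
        Finset.le_sup (f := fun j => (-(WithTop.untopD 0 ((v j) c))).toNat) hj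
      rw [hCj, WithTop.untopD_coe] at h1
      omega
    set m : ℕ := M + 1 with hm
    have hm1 : (1:ℤ) ≤ (m:ℤ) := by exact_mod_cast Nat.succ_le_succ (Nat.zero_le M)
    rcases lt_trichotomy ((v k) b) 0 with hkb | hkb | hkb
    · -- v k b < 0 : take a = c * b^m / (1 + b^m)
      obtain ⟨Bk, hBk⟩ := val_exists_int (v k) hb0
      have hBk0 : Bk < 0 := by exact_mod_cast hBk ▸ hkb
      set d : K := 1 + b ^ m with hd
      have hdi : (v i) d = (((m : ℤ) * Bi : ℤ) : WithTop ℤ) := by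
        rw [hd, AddValuation.map_add_eq_of_lt_right, val_pow (v i) hBi m]
        rw [val_pow (v i) hBi m, AddValuation.map_one]
        exact_mod_cast (show (m:ℤ) * Bi < 0 by nlinarith)
      have hdk : (v k) d = (((m : ℤ) * Bk : ℤ) : WithTop ℤ) := by
        rw [hd, AddValuation.map_add_eq_of_lt_right, val_pow (v k) hBk m]
        rw [val_pow (v k) hBk m, AddValuation.map_one]
        exact_mod_cast (show (m:ℤ) * Bk < 0 by nlinarith)
      have hd0 : d ≠ 0 := ne_zero_of_val_int hdi
      refine ⟨c * b ^ m / d, ?_, ?_⟩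
      · rw [AddValuation.map_div, AddValuation.map_mul, hCi, val_pow (v i) hBi m, hdi]
        have : Ci + (m:ℤ) * Bi - (m:ℤ) * Bi < 0 := by linarith
        exact_mod_cast this
      · intro j hj
        rcases Finset.mem_insert.1 hj with rfl | hj'
        · rw [AddValuation.map_div, AddValuation.map_mul, hCk, val_pow (v j) hBk m, hdk]
          have : (0:ℤ) < Ck + (m:ℤ) * Bk - (m:ℤ) * Bk := by linarith
          exact_mod_cast this
        · obtain ⟨Bj, hBj⟩ := val_exists_int (v j) hb0
          obtain ⟨Cj, hCj⟩ := val_exists_int (v j) hc0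
          have hBj0 : 0 < Bj := by exact_mod_cast hBj ▸ hbs j hj'
          have hCjM : -(M:ℤ) ≤ Cj := hMle j hj' Cj hCj
          have hdj : (v j) d = (0 : WithTop ℤ) := by
            rw [hd, AddValuation.map_add_eq_of_lt_left, AddValuation.map_one]
            rw [val_pow (v j) hBj m, AddValuation.map_one]
            exact_mod_cast (show (0:ℤ) < (m:ℤ) * Bj by nlinarith)
          rw [AddValuation.map_div, AddValuation.map_mul, hCj, val_pow (v j) hBj m, hdj,
            sub_zero]
          have hmM : (M:ℤ) + 1 ≤ (m:ℤ) := by rw [hm]; push_cast; linarith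
          have h1 : (m:ℤ) * 1 ≤ (m:ℤ) * Bj :=
            mul_le_mul_of_nonneg_left (by linarith) (by linarith)
          have : (0:ℤ) < Cj + (m:ℤ) * Bj := by linarith
          exact_mod_cast this
    · -- v k b = 0 : take a = b^m * c
      have hkb' : (v k) b = ((0:ℤ) : WithTop ℤ) := by exact_mod_cast hkb
      refine ⟨b ^ m * c, ?_, ?_⟩
      · rw [AddValuation.map_mul, hCi, val_pow (v i) hBi m]
        have : (m:ℤ) * Bi + Ci < 0 := by nlinarith
        exact_mod_cast this
      · intro j hj
        rcases Finset.mem_insert.1 hj with rfl | hj'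
        · rw [AddValuation.map_mul, hCk, val_pow (v j) hkb' m]
          have : (0:ℤ) < (m:ℤ) * 0 + Ck := by linarith
          exact_mod_cast this
        · obtain ⟨Bj, hBj⟩ := val_exists_int (v j) hb0
          obtain ⟨Cj, hCj⟩ := val_exists_int (v j) hc0
          have hBj0 : 0 < Bj := by exact_mod_cast hBj ▸ hbs j hj'
          have hCjM : -(M:ℤ) ≤ Cj := hMle j hj' Cj hCj
          rw [AddValuation.map_mul, hCj, val_pow (v j) hBj m]
          have hmM : (M:ℤ) + 1 ≤ (m:ℤ) := by rw [hm]; push_cast; linarith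
          have h1 : (m:ℤ) * 1 ≤ (m:ℤ) * Bj :=
            mul_le_mul_of_nonneg_left (by linarith) (by linarith)
          have : (0:ℤ) < (m:ℤ) * Bj + Cj := by linarith
          exact_mod_cast this
    · -- 0 < v k b : take a = b
      refine ⟨b, hbi, fun j hj => ?_⟩
      rcases Finset.mem_insert.1 hj with rfl | hj'
      · exact hkb
      · exact hbs j hj'


end Helpers

/-- (Approximation) Let `K` be a field and `v_1, …, v_n` pairwise
inequivalent nontrivial normalized discrete valuations on `K` (for normalized valuations,
inequivalent means distinct).  Then for all integers `s_1, …, s_n` there exists `f ∈ K`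
with `v_i(f) = s_i` for all `i`. -/
theorem statement_16 (K : Type) [Field K] (n : ℕ)
    (v : Fin n → AddValuation K (WithTop ℤ)) (hv : ∀ i, IsNormalizedVal (v i))
    (hne : ∀ i j, i ≠ j → v i ≠ v j)
    (s : Fin n → ℤ) :
    ∃ f : K, ∀ i, v i f = ((s i : ℤ) : WithTop ℤ) := by
  classical
  have hkey : ∀ i : Fin n, ∃ a : K, v i a < (0 : WithTop ℤ) ∧
      ∀ j, j ≠ i → (0 : WithTop ℤ) < v j a := by
    intro i
    obtain ⟨a, h1, h2⟩ := exists_key v hv i (Finset.univ.erase i)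
      (fun j hj => hne j i (Finset.ne_of_mem_erase hj))
    exact ⟨a, h1, fun j hj => h2 j (Finset.mem_erase.2 ⟨hj, Finset.mem_univ j⟩)⟩
  choose a ha1 ha2 using hkey
  choose x hx using fun i => hv i (s i)
  have ha0 : ∀ i, a i ≠ 0 := fun i => ne_zero_of_val_lt (ha1 i)
  have hx0 : ∀ i, x i ≠ 0 := fun i => ne_zero_of_val_int (hx i)
  choose A hA using fun i j => val_exists_int (v i) (ha0 j)
  choose X hX using fun i j => val_exists_int (v i) (hx0 j)
  have hAii : ∀ i, A i i < 0 := fun i => by exact_mod_cast (hA i i) ▸ ha1 i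
  have hAij : ∀ i j, j ≠ i → 0 < A i j := fun i j hj => by
    exact_mod_cast (hA i j) ▸ ha2 j i hj.symm
  -- choose the exponent m
  set m : ℕ := ((Finset.univ ×ˢ Finset.univ : Finset (Fin n × Fin n)).sup
      (fun p => (s p.1 - X p.1 p.2).toNat)) + 1 with hm
  have hm1 : (1:ℤ) ≤ (m:ℤ) := by
    rw [hm]; push_cast; linarith [Nat.cast_nonneg (α := ℤ)
      (((Finset.univ ×ˢ Finset.univ : Finset (Fin n × Fin n)).sup
      (fun p => (s p.1 - X p.1 p.2).toNat)))]
  have hmX : ∀ i j : Fin n, s i - X i j + 1 ≤ (m:ℤ) := by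
    intro i j
    have h1 : (s i - X i j).toNat ≤ ((Finset.univ ×ˢ Finset.univ : Finset (Fin n × Fin n)).sup
        (fun p => (s p.1 - X p.1 p.2).toNat)) :=
      Finset.le_sup (f := fun p : Fin n × Fin n => (s p.1 - X p.1 p.2).toNat)
        (b := (i, j)) (Finset.mem_product.2 ⟨Finset.mem_univ i, Finset.mem_univ j⟩)
    rw [hm]; push_cast; omega
  set d : Fin n → K := fun j => 1 + (a j) ^ m with hd
  -- values of d
  have hdii : ∀ i, v i (d i) = (((m:ℤ) * A i i : ℤ) : WithTop ℤ) := by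
    intro i
    rw [hd, AddValuation.map_add_eq_of_lt_right, val_pow (v i) (hA i i) m]
    rw [val_pow (v i) (hA i i) m, AddValuation.map_one]
    exact_mod_cast (show (m:ℤ) * A i i < 0 by nlinarith [hAii i])
  have hdij : ∀ i j, j ≠ i → v i (d j) = (0 : WithTop ℤ) := by
    intro i j hj
    rw [hd, AddValuation.map_add_eq_of_lt_left, AddValuation.map_one]
    rw [val_pow (v i) (hA i j) m, AddValuation.map_one]
    exact_mod_cast (show (0:ℤ) < (m:ℤ) * A i j by nlinarith [hAij i j hj])
  have hd0 : ∀ j, d j ≠ 0 := fun j => ne_zero_of_val_int (hdii j)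
  set e : Fin n → K := fun j => (a j) ^ m / d j with he
  refine ⟨∑ j, e j * x j, fun i => ?_⟩
  set g : K := (e i - 1) * x i + ∑ j ∈ Finset.univ.erase i, e j * x j with hg
  have hsplit : ∑ j, e j * x j = x i + g := by
    rw [← Finset.add_sum_erase _ _ (Finset.mem_univ i), hg]
    ring
  have hei : e i - 1 = -(1 / d i) := by
    have hdi0 : (1 : K) + a i ^ m ≠ 0 := by have := hd0 i; rwa [hd] at this
    rw [he, hd]
    field_simp
    ring
  have hgval : ((s i : ℤ) : WithTop ℤ) < v i g := by
    rw [hg]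
    apply AddValuation.map_lt_add
    · rw [hei, neg_mul, AddValuation.map_neg, one_div, AddValuation.map_mul, AddValuation.map_inv,
        hdii i, hx i, ← WithTop.LinearOrderedAddCommGroup.coe_neg, ← WithTop.coe_add]
      exact_mod_cast (show s i < -((m:ℤ) * A i i) + s i by nlinarith [hAii i])
    · refine AddValuation.map_lt_sum' (v := v i) (WithTop.coe_lt_top _) ?_
      intro j hj
      have hj' : j ≠ i := Finset.ne_of_mem_erase hj
      rw [AddValuation.map_mul, he, AddValuation.map_div, val_pow (v i) (hA i j) m,
        hdij i j hj', sub_zero, hX i j, ← WithTop.coe_add]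
      have h2 : (m:ℤ) * 1 ≤ (m:ℤ) * A i j :=
        mul_le_mul_of_nonneg_left (by linarith [hAij i j hj']) (by linarith)
      exact_mod_cast (show s i < (m:ℤ) * A i j + X i j by linarith [hmX i j])
  rw [hsplit, AddValuation.map_add_eq_of_lt_left (v i) (by rw [hx i]; exact hgval), hx i]
end

section
/- Let K be a field of characteristic p > 0 and let v_1, …, v_n be pairwise inequivalent nontrivial normalized discrete valuations on K whose residue fields are algebraically closed. Let a ∈ K and set m_i := max(0, −v_i(a)). Let f ∈ K be such that for every i, v_i(f) = −s_i with p ∤ s_i and (p−1)s_i > p·m_i, and let L = K_{℘,f} be the splitting field of T^p − T − f over K. Then for every i and every discrete valuation w on L extending v_i, with valuation ring 𝒪_w, there exist u ∈ 𝒪_w and l ∈ L such that a = u + l^p. (Thus the class of a is killed simultaneously at all the valuation rings 𝒪_{K,i} after the single Artin–Schreier extension L/K.) -/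
open Polynomial

lemma wval_natcast {R : Type*} [Ring R] (w : AddValuation R (WithTop ℤ)) (n : ℕ) :
    (0 : WithTop ℤ) ≤ w (n : R) := by
  induction n with
  | zero => simp
  | succ k ih =>
    push_cast
    exact w.map_le_add ih (by simp)

lemma smul_coe_withTop (n : ℕ) (z : ℤ) :
    n • ((z : WithTop ℤ)) = ((n * z : ℤ) : WithTop ℤ) := by
  induction n with
  | zero => simp
  | succ k ih =>
    rw [succ_nsmul, ih, ← WithTop.coe_add]
    congr 1
    push_cast
    ring

lemma exists_int_val {K : Type*} [DivisionRing K] (v : AddValuation K (WithTop ℤ)) {x : K}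
    (hx : x ≠ 0) : ∃ n : ℤ, v x = (n : WithTop ℤ) := by
  have h := v.ne_top_iff.mpr hx
  cases hvx : v x with
  | top => exact absurd hvx h
  | coe n => exact ⟨n, rfl⟩

lemma one_le_of_pos {t : WithTop ℤ} (h : (0 : WithTop ℤ) < t) : ((1 : ℤ) : WithTop ℤ) ≤ t := by
  cases t with
  | top => exact le_top
  | coe n =>
    rw [WithTop.coe_le_coe]
    have := WithTop.coe_lt_coe.mp (show ((0:ℤ) : WithTop ℤ) < n by exact_mod_cast h)
    omega

lemma w_nonneg_of_v_nonneg {K L : Type*} [Field K] [Field L] [Algebra K L]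
    {v : AddValuation K (WithTop ℤ)} {w : AddValuation L (WithTop ℤ)} {e : ℤ}
    (hew : ExtendsWith v w e) (he : 0 < e) {c : K} (hc : (0 : WithTop ℤ) ≤ v c) :
    (0 : WithTop ℤ) ≤ w (algebraMap K L c) := by
  by_cases h : c = 0
  · simp [h]
  · obtain ⟨n, hn⟩ := exists_int_val v h
    rw [hew c n hn]
    have hn0 : (0:ℤ) ≤ n := by
      rw [hn] at hc; exact_mod_cast hc
    exact_mod_cast mul_nonneg he.le hn0

lemma aux_reduce (p : ℕ) (hp : p.Prime) (K L : Type*) [Field K] [CharP K p] [Field L]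
    [Algebra K L]
    (v : AddValuation K (WithTop ℤ)) (hv : IsNormalizedVal v)
    (halg : ∀ g : Polynomial K, g.Monic → 0 < g.degree →
      (∀ j, (0 : WithTop ℤ) ≤ v (g.coeff j)) →
      ∃ x : K, (0 : WithTop ℤ) ≤ v x ∧ (0 : WithTop ℤ) < v (Polynomial.eval x g))
    (s : ℕ) (hs : ¬ p ∣ s) (f : K) (hfv : v f = ((-(s:ℤ) : ℤ) : WithTop ℤ))
    (w : AddValuation L (WithTop ℤ)) (e' : ℤ) (he' : 0 < e')
    (hew : ExtendsWith v w ((p:ℤ) * e'))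
    (θ : L) (hθ : θ ^ p = θ + algebraMap K L f)
    (hwθ : w θ = ((-(e' * s) : ℤ) : WithTop ℤ)) :
    ∀ N : ℕ, (p:ℤ) * N < ((p:ℤ) - 1) * s →
      ∀ c0 : K, (((-(N:ℤ)) : ℤ) : WithTop ℤ) ≤ v c0 →
      ∃ l : L, (0:WithTop ℤ) ≤ w (algebraMap K L c0 - l ^ p) := by
  haveI : Fact p.Prime := ⟨hp⟩
  haveI : CharP L p := charP_of_injective_algebraMap (algebraMap K L).injective p
  have hp2 : 2 ≤ (p:ℤ) := by exact_mod_cast hp.two_le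
  have hs1 : 1 ≤ (s:ℤ) := by
    have : s ≠ 0 := fun h => hs (h ▸ dvd_zero p)
    omega
  have hpe' : 0 < (p:ℤ) * e' := by positivity
  intro N
  induction N with
  | zero =>
    intro _ c0 hc0
    refine ⟨0, ?_⟩
    rw [zero_pow hp.ne_zero, sub_zero]
    exact w_nonneg_of_v_nonneg hew hpe' (by simpa using hc0)
  | succ N IH =>
    intro hN c0 hc0
    push_cast at hN
    by_cases hIHc : (((-(N:ℤ)) : ℤ) : WithTop ℤ) ≤ v c0
    · refine IH ?_ c0 hIHc
      have : (p:ℤ) * N ≤ (p:ℤ) * ((N:ℤ)+1) := by nlinarith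
      linarith
    have hc0ne : c0 ≠ 0 := by
      intro h
      exact hIHc (by rw [h, AddValuation.map_zero]; exact le_top)
    obtain ⟨nv, hnv⟩ := exists_int_val v hc0ne
    have hnv' : nv = -((N:ℤ)+1) := by
      rw [hnv] at hc0 hIHc
      have h1 : (-(((N:ℤ)+1)) : ℤ) ≤ nv := by
        have := WithTop.coe_le_coe.mp hc0
        push_cast at this
        linarith
      have h2 : ¬ (-(N:ℤ) ≤ nv) := fun h => hIHc (WithTop.coe_le_coe.mpr h)
      omega
    -- choose k with k*s ≡ N+1 mod p
    set k : ℕ := (((N+1 : ℕ) : ZMod p) * ((s : ZMod p))⁻¹).val with hk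
    have hsz : ((s : ZMod p)) ≠ 0 := by
      rw [Ne, ZMod.natCast_eq_zero_iff]; exact hs
    have hkZ : ((k : ZMod p)) = ((N+1 : ℕ) : ZMod p) * (s : ZMod p)⁻¹ :=
      ZMod.natCast_zmod_val _
    have hdvd : ((p:ℤ)) ∣ ((k:ℤ) * s - ((N:ℤ)+1)) := by
      rw [← ZMod.intCast_zmod_eq_zero_iff_dvd]
      push_cast
      rw [hkZ, mul_assoc, inv_mul_cancel₀ hsz, mul_one]
      push_cast
      ring
    obtain ⟨V, hV⟩ := hdvd
    obtain ⟨d0, hd0⟩ := hv V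
    have hd0ne : d0 ≠ 0 := by
      intro h; rw [h, AddValuation.map_zero] at hd0; exact WithTop.top_ne_coe hd0
    have hfne : f ≠ 0 := by
      intro h; rw [h, AddValuation.map_zero] at hfv; exact WithTop.top_ne_coe hfv
    have hDkne : d0 ^ p * f ^ k ≠ 0 := mul_ne_zero (pow_ne_zero _ hd0ne) (pow_ne_zero _ hfne)
    have hvDk : v (d0 ^ p * f ^ k) = (((p:ℤ) * V + (k:ℤ) * (-(s:ℤ)) : ℤ) : WithTop ℤ) := by
      rw [AddValuation.map_mul, AddValuation.map_pow, AddValuation.map_pow, hd0, hfv,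
        smul_coe_withTop, smul_coe_withTop, ← WithTop.coe_add]
    have hVq : (p:ℤ) * V + (k:ℤ) * (-(s:ℤ)) = -((N:ℤ)+1) := by linarith
    set α : K := c0 / (d0 ^ p * f ^ k) with hα
    have hαne : α ≠ 0 := div_ne_zero hc0ne hDkne
    obtain ⟨aα, haα⟩ := exists_int_val v hαne
    have hvα0 : aα = 0 := by
      have hmul : α * (d0 ^ p * f ^ k) = c0 := div_mul_cancel₀ _ hDkne
      have h2 : v α + v (d0 ^ p * f ^ k) = v c0 := by rw [← v.map_mul, hmul]
      rw [haα, hvDk, hnv, hnv', ← WithTop.coe_add] at h2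
      have h3 : aα + ((p:ℤ) * V + (k:ℤ) * (-(s:ℤ))) = -((N:ℤ)+1) := by exact_mod_cast h2
      linarith
    -- find x approximating a p-th root of α
    have hgm : (X ^ p - C α).Monic := monic_X_pow_sub_C α hp.ne_zero
    have hgd : 0 < (X ^ p - C α).degree := by
      rw [degree_X_pow_sub_C hp.pos]
      exact_mod_cast hp.pos
    have hgc : ∀ j, (0 : WithTop ℤ) ≤ v ((X ^ p - C α).coeff j) := by
      intro j
      simp only [coeff_sub, coeff_X_pow, coeff_C]
      rcases eq_or_ne j p with rfl | h1
      · simp [hp.ne_zero]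
      · rcases eq_or_ne j 0 with rfl | h2
        · rw [if_neg h1, if_pos rfl, zero_sub, v.map_neg, haα, hvα0]
          simp
        · simp [h1, h2]
    obtain ⟨x, hx0, hx1⟩ := halg (X ^ p - C α) hgm hgd hgc
    have hxg : eval x (X ^ p - C α) = x ^ p - α := by simp
    rw [hxg] at hx1
    have hxne : x ≠ 0 := by
      intro h
      rw [h, zero_pow hp.ne_zero, zero_sub, v.map_neg, haα, hvα0] at hx1
      simp at hx1
    obtain ⟨ξ, hξ⟩ := exists_int_val v hxne
    have hξ0 : 0 ≤ ξ := by rw [hξ] at hx0; exact_mod_cast hx0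
    have hvd : v (x * d0) = ((ξ + V : ℤ) : WithTop ℤ) := by
      rw [v.map_mul, hξ, hd0, ← WithTop.coe_add]
    have hkey : c0 - (x * d0) ^ p * f ^ k = (α - x ^ p) * (d0 ^ p * f ^ k) := by
      rw [hα, sub_mul, div_mul_cancel₀ _ hDkne, mul_pow]
      ring
    have hvc0' : (((-(N:ℤ)) : ℤ) : WithTop ℤ) ≤ v (c0 - (x * d0) ^ p * f ^ k) := by
      rw [hkey, v.map_mul, hvDk]
      have h1 : ((1:ℤ) : WithTop ℤ) ≤ v (α - x ^ p) := by
        rw [v.map_sub_swap]; exact one_le_of_pos hx1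
      calc (((-(N:ℤ)) : ℤ) : WithTop ℤ)
          = ((1:ℤ):WithTop ℤ) + (((p:ℤ) * V + (k:ℤ) * (-(s:ℤ)) : ℤ) : WithTop ℤ) := by
            rw [← WithTop.coe_add]
            congr 1
            linarith
        _ ≤ v (α - x ^ p) + (((p:ℤ) * V + (k:ℤ) * (-(s:ℤ)) : ℤ) : WithTop ℤ) :=
            add_le_add_left h1 _
    obtain ⟨l', hl'⟩ := IH (by nlinarith) _ hvc0'
    set F : L := algebraMap K L f with hF
    set D : L := algebraMap K L ((x * d0) ^ p) with hDdef
    set z : L := algebraMap K L (x * d0) * θ ^ k with hz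
    refine ⟨z + l', ?_⟩
    have hzp : z ^ p = D * (θ + F) ^ k := by
      rw [hz, mul_pow, ← map_pow, ← pow_mul, mul_comm k p, pow_mul, hθ]
    have hc0eq : algebraMap K L c0
        = algebraMap K L (c0 - (x * d0) ^ p * f ^ k) + D * F ^ k := by
      simp only [map_sub, map_mul, map_pow, hDdef, hF]
      ring
    have hsplit : algebraMap K L c0 - (z + l') ^ p
        = (algebraMap K L (c0 - (x * d0) ^ p * f ^ k) - l' ^ p)
          - D * ((θ + F) ^ k - F ^ k) := by
      rw [add_pow_char, hzp, hc0eq]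
      ring
    rw [hsplit]
    refine w.map_le_sub hl' ?_
    have hexp : (θ + F) ^ k - F ^ k
        = ∑ m ∈ Finset.range k, θ ^ (m+1) * F ^ (k - (m+1)) * ((k.choose (m+1) : L)) := by
      rw [add_pow, Finset.sum_range_succ']
      simp
    rw [hexp, Finset.mul_sum]
    refine w.map_le_sum ?_
    intro m hm
    have hmk : m + 1 ≤ k := Finset.mem_range.mp hm
    have hwD : w D = (((p:ℤ)*e' * ((p:ℤ)*(ξ+V)) : ℤ) : WithTop ℤ) := by
      apply hew
      rw [v.map_pow, hvd, smul_coe_withTop]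
    have hwF : w F = (((p:ℤ)*e' * (-(s:ℤ)) : ℤ) : WithTop ℤ) := hew f _ hfv
    have hterm : D * (θ ^ (m+1) * F ^ (k-(m+1)) * ((k.choose (m+1) : L)))
        = (D * θ ^ (m+1) * F ^ (k-(m+1))) * ((k.choose (m+1) : L)) := by ring
    rw [hterm, w.map_mul]
    have h1 : w (D * θ ^ (m+1) * F ^ (k-(m+1)))
        = ((((p:ℤ)*e' * ((p:ℤ)*(ξ+V)) + ((m:ℤ)+1) * (-(e' * s))
            + ((k - (m+1) : ℕ) : ℤ) * ((p:ℤ)*e' * (-(s:ℤ)))) : ℤ) : WithTop ℤ) := by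
      rw [w.map_mul, w.map_mul, hwD, w.map_pow, hwθ, smul_coe_withTop, w.map_pow, hwF,
        smul_coe_withTop, ← WithTop.coe_add, ← WithTop.coe_add]
      push_cast
      ring_nf
    rw [h1]
    have hsub : ((k - (m+1) : ℕ) : ℤ) = (k:ℤ) - ((m:ℤ)+1) := by
      push_cast [Nat.cast_sub hmk]
      ring
    have hA : (0:ℤ) ≤ (p:ℤ)*e' * ((p:ℤ)*(ξ+V)) + ((m:ℤ)+1) * (-(e' * s))
        + ((k - (m+1) : ℕ) : ℤ) * ((p:ℤ)*e' * (-(s:ℤ))) := by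
      rw [hsub]
      have hm0 : (0:ℤ) ≤ (m:ℤ) := by positivity
      nlinarith [mul_pos he' (show (0:ℤ) < ((p:ℤ)-1) * s - (p:ℤ)*((N:ℤ)+1) by linarith),
        mul_nonneg (mul_nonneg (by linarith : (0:ℤ) ≤ (p:ℤ)*e') (by linarith : (0:ℤ) ≤ (p:ℤ))) hξ0,
        mul_nonneg (mul_nonneg hm0 he'.le) (mul_nonneg (by linarith : (0:ℤ) ≤ (s:ℤ)) (by linarith : (0:ℤ) ≤ (p:ℤ)-1))]
    calc (0:WithTop ℤ) = ((0:ℤ):WithTop ℤ) + ((0:ℤ):WithTop ℤ) := by simp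
      _ ≤ _ := add_le_add (by exact_mod_cast hA) (wval_natcast w _)

/-- Let `K` have characteristic `p > 0` and let `v_1, …, v_n` be pairwise
inequivalent nontrivial normalized discrete valuations on `K` with algebraically closed
residue fields (every monic polynomial of positive degree with integral coefficients has a
root modulo the maximal ideal).  Let `a ∈ K` and `m_i ≥ max(0, -v_i(a))`.  Let `f ∈ K`
with `v_i(f) = -s_i`, `p ∤ s_i` and `(p-1)s_i > p·m_i` for all `i`, and let `L = K_{℘,f}`
be the splitting field of `T^p - T - f`.  Then for every `i` and every discrete valuation
`w` on `L` extending `v_i`, there are `u` in the valuation ring of `w` and `l ∈ L` with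
`a = u + l^p`. -/
theorem statement_18 (p : ℕ) (hp : p.Prime) (K : Type) [Field K] [CharP K p]
    (n : ℕ) (v : Fin n → AddValuation K (WithTop ℤ))
    (hv : ∀ i, IsNormalizedVal (v i))
    (hne : ∀ i j, i ≠ j → v i ≠ v j)
    (halg : ∀ (i : Fin n) (g : Polynomial K), g.Monic → 0 < g.degree →
      (∀ j, (0 : WithTop ℤ) ≤ v i (g.coeff j)) →
      ∃ x : K, (0 : WithTop ℤ) ≤ v i x ∧ (0 : WithTop ℤ) < v i (Polynomial.eval x g))
    (a : K) (m : Fin n → ℕ) (hm : ∀ i, ((-(m i : ℤ) : ℤ) : WithTop ℤ) ≤ v i a)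
    (f : K) (s : Fin n → ℕ)
    (hf : ∀ i, v i f = ((-(s i : ℤ) : ℤ) : WithTop ℤ) ∧ ¬ p ∣ s i ∧ p * m i < (p - 1) * s i)
    (L : Type) [Field L] [Algebra K L]
    (hL : Polynomial.IsSplittingField K L (Polynomial.X ^ p - Polynomial.X - Polynomial.C f)) :
    ∀ (i : Fin n) (w : AddValuation L (WithTop ℤ)),
      (∃ e : ℤ, 0 < e ∧ ExtendsWith (v i) w e) →
      ∃ u l : L, (0 : WithTop ℤ) ≤ w u ∧ algebraMap K L a = u + l ^ p := by
  rintro i w ⟨e, he, hew⟩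
  obtain ⟨hfv, hs, hms⟩ := hf i
  haveI : Fact p.Prime := ⟨hp⟩
  have hp2 : 2 ≤ (p:ℤ) := by exact_mod_cast hp.two_le
  have hs1 : 1 ≤ (s i : ℤ) := by
    have : s i ≠ 0 := fun h => hs (h ▸ dvd_zero p)
    omega
  -- a root of the Artin–Schreier polynomial
  have hdeg : (X ^ p - X - C f : K[X]).degree = p := by
    rw [sub_sub, degree_sub_eq_left_of_degree_lt, degree_X_pow]
    rw [degree_X_pow]
    calc (X + C f : K[X]).degree ≤ max (X : K[X]).degree (C f).degree := degree_add_le _ _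
      _ ≤ 1 := by
          simp only [degree_X, max_le_iff]
          exact ⟨le_refl _, le_trans (degree_C_le) (by norm_num)⟩
      _ < p := by exact_mod_cast hp.one_lt
  obtain ⟨θ, hroot⟩ := hL.splits'.exists_eval_eq_zero
    (by rw [degree_map, hdeg]; exact_mod_cast hp.ne_zero)
  have h2 : θ ^ p - θ - algebraMap K L f = 0 := by simpa using hroot
  have hθ : θ ^ p = θ + algebraMap K L f := by linear_combination h2
  -- the valuation of θ
  have hwF : w (algebraMap K L f) = ((e * (-(s i:ℤ)) : ℤ) : WithTop ℤ) := hew f _ hfv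
  have hθne : θ ≠ 0 := by
    intro h
    rw [h, zero_pow hp.ne_zero] at hθ
    have hf0 : f = 0 := (algebraMap K L).injective (by
      rw [map_zero]; linear_combination -hθ)
    rw [hf0, AddValuation.map_zero] at hfv
    exact WithTop.top_ne_coe hfv
  obtain ⟨T, hT⟩ := exists_int_val w hθne
  have hFθ : algebraMap K L f = θ ^ p - θ := by linear_combination -hθ
  have hTneg : T < 0 := by
    by_contra hTn
    push_neg at hTn
    have h1 : (0 : WithTop ℤ) ≤ w (algebraMap K L f) := by
      rw [hFθ]
      refine w.map_le_sub ?_ ?_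
      · rw [w.map_pow, hT, smul_coe_withTop]
        exact_mod_cast mul_nonneg (Int.natCast_nonneg p) hTn
      · rw [hT]; exact_mod_cast hTn
    rw [hwF] at h1
    have h3 : (0:ℤ) ≤ e * (-(s i:ℤ)) := by exact_mod_cast h1
    nlinarith
  have hpT : (p:ℤ) * T = e * (-(s i : ℤ)) := by
    have hlt : w (θ ^ p) < w θ := by
      rw [w.map_pow, hT, smul_coe_withTop, WithTop.coe_lt_coe]
      nlinarith
    have h4 : w (θ ^ p - θ) = w (θ ^ p) := w.map_sub_eq_of_lt_left hlt
    rw [hFθ, h4, w.map_pow, hT, smul_coe_withTop] at hwF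
    exact_mod_cast hwF
  have hpdvd : (p:ℤ) ∣ e := by
    have hprime : Prime (p:ℤ) := Nat.prime_iff_prime_int.mp hp
    have hd : (p:ℤ) ∣ e * (s i:ℤ) := ⟨-T, by linarith⟩
    rcases hprime.dvd_mul.mp hd with h | h
    · exact h
    · exact absurd (Int.natCast_dvd_natCast.mp h) hs
  obtain ⟨e', he'eq⟩ := hpdvd
  have he'pos : 0 < e' := by nlinarith
  have hT' : T = -(e' * (s i:ℤ)) := by
    have h5 : (p:ℤ) * T = (p:ℤ) * (-(e' * (s i:ℤ))) := by rw [hpT, he'eq]; ring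
    exact mul_left_cancel₀ (by positivity : (p:ℤ) ≠ 0) h5
  have hwθ : w θ = ((-(e' * (s i:ℤ)) : ℤ) : WithTop ℤ) := by rw [hT, hT']
  have hewp : ExtendsWith (v i) w ((p:ℤ) * e') := by rw [← he'eq]; exact hew
  have hN : (p:ℤ) * (m i) < ((p:ℤ) - 1) * (s i) := by
    have h6 : ((p * m i : ℕ) : ℤ) < (((p-1) * s i : ℕ) : ℤ) := by exact_mod_cast hms
    push_cast [Nat.cast_sub hp.one_le] at h6
    linarith
  obtain ⟨l, hl⟩ := aux_reduce p hp K L (v i) (hv i) (fun g h1 h2 h3 => halg i g h1 h2 h3)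
    (s i) hs f hfv w e' he'pos hewp θ hθ hwθ (m i) hN a (hm i)
  exact ⟨algebraMap K L a - l ^ p, l, hl, by ring⟩
end
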